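/- Assume G is abelian, and let H ⊊ K be closed subgroups of G with K ≠ G. For all positive integers i and j: (a) the number of forests in 𝓕(i+j, G, V) having exactly two connected components, whose subforest decomposition consists of one K-tree with i leaves and one H-tree with j leaves, equals binom(i+j, i)·λ_{K,i}·λ_{H,j}; (b) the number of forests in 𝓕(i+j−1, G, V) consisting of a single tree whose subforest decomposition consists of one K-tree with i leaves and one H-tree with j leaves (the root of the H-tree glued to a leaf of the K-tree) equals binom(i+j−1, j)·λ_{K,i}·λ_{H,j}. -/

import Mathlib

variable {G : Type*} [CommGroup G] {V : Type*} [AddCommGroup V] [Module ℂ V]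

/-- The subspace `Fix(H)` of vectors fixed by every element of the subgroup `H`
under the representation `ρ`. -/
def fixedSpace (ρ : Representation ℂ G V) (H : Subgroup G) : Submodule ℂ V where
  carrier := {v | ∀ h ∈ H, ρ h v = v}
  add_mem' := by
    intro a b ha hb h hh
    rw [map_add, ha h hh, hb h hh]
  zero_mem' := by
    intro h hh
    exact map_zero _
  smul_mem' := by
    intro c a ha h hh
    rw [map_smul, ha h hh]

/-- A subgroup `H ≤ G` is closed (w.r.t. `ρ`) if every subgroup `K` with `H ≤ K`
and `Fix(K) = Fix(H)` satisfies `K = H`. -/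
def IsClosedSubgroup (ρ : Representation ℂ G V) (H : Subgroup G) : Prop :=
  ∀ K : Subgroup G, H ≤ K → fixedSpace ρ K = fixedSpace ρ H → K = H

open scoped Pointwise

/-- A vertex of a labelled forest on the leaf set `{1,…,n}` (encoded as `Fin n`):
`leaves` is the set of leaves of the forest lying below the vertex, `label` is the
subgroup labelling the vertex, and, for a leaf `l` below the vertex, `coset l` is
the coset `g_l K` obtained by composing the edge labels on the path from the
vertex down to the leaf `l` (as in the paper, if the path carries, from the top,
the coset labels `a₁K, a₂K₂, …, a_lK_l`, then `coset l = a_l ⋯ a₂ a₁ K`); on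
leaves not below the vertex, `coset` is `∅`.  Within the forests considered below
a vertex is uniquely determined by this data, and conversely the single-edge
labels are recovered from it, so this encoding is faithful. -/
structure FVertex (n : ℕ) (G : Type*) [Group G] where
  leaves : Finset (Fin n)
  label : Subgroup G
  coset : Fin n → Set G

/-- `[P] ≤ [Q]` for conjugacy classes of subgroups: some `G`-conjugate of `P` is
contained in `Q`. -/
def ConjLE {G : Type*} [Group G] (P Q : Subgroup G) : Prop :=
  ∃ a : G, P.map (MulAut.conj a).toMonoidHom ≤ Q

/-- `[P] ≨ [Q]` (strictly). -/
def ConjLT {G : Type*} [Group G] (P Q : Subgroup G) : Prop :=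
  ConjLE P Q ∧ ¬ ConjLE Q P

/-- `v` lies strictly below `w` in the forest: either the leaf set of `v` is
strictly smaller, or the leaf sets agree and the vertices lie on a common chain
of unique-child vertices, ordered by their labels. -/
def FVertex.below {n : ℕ} {G : Type*} [Group G] (v w : FVertex n G) : Prop :=
  v.leaves ⊂ w.leaves ∨ (v.leaves = w.leaves ∧ ConjLT v.label w.label)

/-- `w` is a direct descendant (child) of `v` in the forest `F`. -/
def IsDirectChild {n : ℕ} {G : Type*} [Group G] (F : Set (FVertex n G))
    (w v : FVertex n G) : Prop :=
  w.below v ∧ ¬ ∃ u ∈ F, w.below u ∧ u.below v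

/-- The forests of the family 𝓕(n,G,V): rooted oriented forests with leaves
labelled bijectively by `{1,…,n}` (isolated "fallen" leaves are allowed and are
implicit: they are the leaves lying below no vertex), at least one internal
vertex, internal vertices labelled by closed subgroups of `G`, and edges labelled
by cosets, subject to conditions (1)-(5) of the paper.  A forest is encoded by
its set of internal vertices, each vertex carrying its leaf set, its subgroup
label and the composed coset data of the paths towards its leaves. -/
def IsFGForest {n : ℕ} (ρ : Representation ℂ G V) (F : Set (FVertex n G)) : Prop :=
  -- a finite forest with at least one internal vertex
  F.Finite ∧ F.Nonempty ∧
  -- every internal vertex has at least one leaf below it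
  (∀ v ∈ F, v.leaves.Nonempty) ∧
  -- internal vertices are labelled by closed subgroups
  (∀ v ∈ F, IsClosedSubgroup ρ v.label) ∧
  -- the leaf sets form a laminar family (forest structure)
  (∀ v ∈ F, ∀ w ∈ F, (v.leaves ∩ w.leaves).Nonempty →
      v.leaves ⊆ w.leaves ∨ w.leaves ⊆ v.leaves) ∧
  -- (1) if an internal vertex labelled P descends from one labelled Q, then [P] ≤ [Q]
  (∀ v ∈ F, ∀ w ∈ F, w.leaves ⊂ v.leaves → ConjLE w.label v.label) ∧
  -- (1)&(2) vertices with the same leaf set form a chain of unique children with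
  -- strictly increasing labels (in particular a unique internal child has
  -- strictly smaller label class)
  (∀ v ∈ F, ∀ w ∈ F, v ≠ w → v.leaves = w.leaves →
      ConjLT v.label w.label ∨ ConjLT w.label v.label) ∧
  -- (2) if a leaf is the unique child of a vertex, its label is not {e}
  (∀ v ∈ F, ∀ l : Fin n, v.leaves = {l} →
      (¬ ∃ w ∈ F, w ≠ v ∧ w.leaves = v.leaves ∧ ConjLT w.label v.label) →
      v.label ≠ ⊥) ∧
  -- (3) the label G appears in at most one tree, and a vertex labelled G has at
  -- most one direct descendant labelled G: the G-labelled vertices are pairwise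
  -- comparable
  (∀ v ∈ F, ∀ w ∈ F, v.label = ⊤ → w.label = ⊤ → v = w ∨ v.below w ∨ w.below v) ∧
  -- (4) the (composed) coset data consists of left cosets of the vertex label …
  (∀ v ∈ F, ∀ l ∈ v.leaves, ∃ a : G, v.coset l = a • (v.label : Set G)) ∧
  (∀ v ∈ F, ∀ l : Fin n, l ∉ v.leaves → v.coset l = ∅) ∧
  -- … and is compatible along edges: the edge from `v` (labelled Q) to a direct
  -- child `w` (labelled P) carries a coset label aQ with a⁻¹Pa ⊆ Q, and (by (5))
  -- the edge towards the child subtree containing the smallest leaf carries eQ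
  (∀ v ∈ F, ∀ w ∈ F, IsDirectChild F w v →
      ∃ a : G, (w.label.map (MulAut.conj a⁻¹).toMonoidHom ≤ v.label) ∧
        (∀ l ∈ w.leaves, v.coset l = w.coset l * (a • (v.label : Set G))) ∧
        (∀ hv : v.leaves.Nonempty, v.leaves.min' hv ∈ w.leaves → a ∈ v.label)) ∧
  -- (5) the composed coset towards the smallest leaf below a vertex is eK
  (∀ v ∈ F, ∀ hv : v.leaves.Nonempty, v.coset (v.leaves.min' hv) = (v.label : Set G))

/-- The set of roots (maximal vertices) of the forest `F`: each corresponds to a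
tree of `F`. -/
def rootsOf {n : ℕ} {G : Type*} [Group G] (F : Set (FVertex n G)) :
    Set (FVertex n G) :=
  {v | v ∈ F ∧ ∀ w ∈ F, ¬ v.below w}

open Classical in
/-- The fallen leaves of `F`: the leaves lying below no internal vertex. -/
noncomputable def fallenLeaves {n : ℕ} {G : Type*} [Group G]
    (F : Set (FVertex n G)) : Finset (Fin n) :=
  Finset.univ.filter fun l => ∀ v ∈ F, l ∉ v.leaves

/-- The number of connected components of `F` (trees and fallen leaves each count
as one component). -/
noncomputable def components {n : ℕ} {G : Type*} [Group G]
    (F : Set (FVertex n G)) : ℕ :=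
  (rootsOf F).ncard + (fallenLeaves F).card

open Classical in
/-- The number of leaves of `F` attached to `H`-labelled vertices, i.e. whose
parent (the minimal internal vertex above them) is labelled `H`. -/
noncomputable def attachedCount {n : ℕ} {G : Type*} [Group G]
    (F : Set (FVertex n G)) (H : Subgroup G) : ℕ :=
  (Finset.univ.filter fun l : Fin n => ∃ v ∈ F, l ∈ v.leaves ∧ v.label = H ∧
    ∀ w ∈ F, l ∈ w.leaves → (v = w ∨ v.below w)).card

/-- An `H`-tree on the leaf set `{1,…,m}`: a single rooted oriented tree, with
leaves bijectively labelled by `{1,…,m}`, all of whose internal vertices are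
labelled by the (closed) subgroup `H`, with edges labelled by cosets of `H`,
normalized as in (5); every internal vertex has at least two children or a single
child which is a leaf (the latter only if `H ≠ {e}`). -/
def IsHTree {m : ℕ} (ρ : Representation ℂ G V) (H : Subgroup G)
    (F : Set (FVertex m G)) : Prop :=
  IsFGForest ρ F ∧ (∀ v ∈ F, v.label = H) ∧ ∃ v ∈ F, v.leaves = Finset.univ

/-- `λ_{H,i}`: the number of `H`-trees on the leaf set `{1,…,i}`. -/
noncomputable def lamHT (ρ : Representation ℂ G V) (H : Subgroup G) (i : ℕ) : ℕ :=
  Nat.card {F : Set (FVertex i G) // IsHTree ρ H F}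


/-!
For abelian `G`, comparing conjugacy classes of subgroups is comparing subgroups, and the
conditions defining `𝓕(n,G,V)` simplify accordingly. Relabelling the leaves of a tree in increasing
order identifies the `H`-trees with a given leaf set `S` with the `H`-trees on `{1,…,#S}`, so there
are `λ_{H,#S}` of them.

(a) A forest of part (a) is the union of its two trees, so it amounts to the leaf set `S` of its
`K`-tree, chosen among the `i + j` leaves, a `K`-tree on `S` and an `H`-tree on the complement.

(b) In a forest of part (b) the `H`-vertices form an `H`-tree whose leaf set `T` has `j` elements,
and no `K`-vertex separates `T`. Contracting `T` to its least leaf `t₀` leaves a `K`-tree on the `i`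
leaves outside `T \ {t₀}`. Edge cosets compose along paths, so on `T` the cosets of a `K`-vertex
are those of the root of the `H`-tree times its coset at `t₀`; hence grafting the `H`-tree back at
`t₀` undoes the contraction, and the forest amounts to `T`, the `K`-tree and the `H`-tree.
-/

theorem Subgroup.map_conj_eq_self (a : G) (P : Subgroup G) :
    P.map (MulAut.conj a).toMonoidHom = P := by
  convert P.map_id
  ext x
  simp

theorem conjLE_iff_le {P Q : Subgroup G} : ConjLE P Q ↔ P ≤ Q :=
  ⟨fun ⟨a, h⟩ => P.map_conj_eq_self a ▸ h, fun h => ⟨1, (P.map_conj_eq_self 1).symm ▸ h⟩⟩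

theorem conjLT_iff_lt {P Q : Subgroup G} : ConjLT P Q ↔ P < Q := by
  simp [ConjLT, conjLE_iff_le, lt_iff_le_not_ge]

theorem smul_coe_mul_smul_coe {H K : Subgroup G} (hHK : H ≤ K) (x y : G) :
    (x • (H : Set G)) * (y • (K : Set G)) = (x * y) • (K : Set G) := by
  rw [smul_mul_smul_comm]
  congr 1
  refine subset_antisymm ?_ fun k hk => ⟨1, H.one_mem, k, hk, one_mul k⟩
  rintro _ ⟨h, hh, k, hk, rfl⟩
  exact K.mul_mem (hHK hh) hk

theorem coe_mul_smul_coe {H K : Subgroup G} (hHK : H ≤ K) (y : G) :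
    (H : Set G) * (y • (K : Set G)) = y • (K : Set G) := by
  simpa using smul_coe_mul_smul_coe hHK 1 y

theorem mem_of_smul_coe_eq {K : Subgroup G} {a : G} (h : a • (K : Set G) = K) : a ∈ K := by
  have : a * 1 ∈ a • (K : Set G) := Set.smul_mem_smul_set K.one_mem
  rwa [h, mul_one] at this

theorem Finset.map_eq_singleton_iff {α β : Type*} {f : α ↪ β} {s : Finset α} {b : β} :
    s.map f = {b} ↔ ∃ a, s = {a} ∧ f a = b := by
  refine ⟨fun h => ?_, fun ⟨a, hs, ha⟩ => by simp [hs, ha]⟩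
  obtain ⟨a, rfl⟩ := Finset.card_eq_one.1 (by rw [← Finset.card_map f, h, Finset.card_singleton])
  exact ⟨a, rfl, by simpa using h⟩

namespace FVertex

@[ext]
theorem ext {Γ : Type*} [Group Γ] {n : ℕ} {v w : FVertex n Γ} (hleaves : v.leaves = w.leaves)
    (hlabel : v.label = w.label) (hcoset : v.coset = w.coset) : v = w := by
  cases v; cases w
  congr

variable {n : ℕ}

theorem below_iff {v w : FVertex n G} :
    v.below w ↔ v.leaves ⊂ w.leaves ∨ (v.leaves = w.leaves ∧ v.label < w.label) := by
  simp [FVertex.below, conjLT_iff_lt]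

theorem below_of_subset_of_lt {v w : FVertex n G} (hsub : v.leaves ⊆ w.leaves)
    (hlt : v.label < w.label) : v.below w := by
  rcases hsub.eq_or_ssubset with heq | hss
  exacts [below_iff.2 (Or.inr ⟨heq, hlt⟩), below_iff.2 (Or.inl hss)]

theorem leaves_subset_of_below {v w : FVertex n G} (h : v.below w) : v.leaves ⊆ w.leaves := by
  rcases below_iff.1 h with h | ⟨h, -⟩
  exacts [h.subset, h.subset]

theorem below_trans {u v w : FVertex n G} (huv : u.below v) (hvw : v.below w) : u.below w := by
  rw [below_iff] at *
  rcases huv with h₁ | ⟨e₁, l₁⟩ <;> rcases hvw with h₂ | ⟨e₂, l₂⟩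
  · exact Or.inl (h₁.trans h₂)
  · exact Or.inl (e₂ ▸ h₁)
  · exact Or.inl (e₁ ▸ h₂)
  · exact Or.inr ⟨e₁.trans e₂, l₁.trans l₂⟩

theorem below_irrefl (v : FVertex n G) : ¬ v.below v := by
  simp [below_iff]

end FVertex

open FVertex

/-! ### The axioms of `𝓕(n,G,V)` for abelian `G` -/

section Forest

variable {n : ℕ}

/-- The conditions of `IsFGForest` that do not involve cosets, for abelian `G`, where comparing
conjugacy classes of subgroups is comparing subgroups. -/
structure LabelAxioms (ρ : Representation ℂ G V) (F : Set (FVertex n G)) : Prop where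
  finite : F.Finite
  nonempty : F.Nonempty
  leaves_nonempty : ∀ v ∈ F, v.leaves.Nonempty
  isClosed : ∀ v ∈ F, IsClosedSubgroup ρ v.label
  laminar : ∀ v ∈ F, ∀ w ∈ F, (v.leaves ∩ w.leaves).Nonempty →
    v.leaves ⊆ w.leaves ∨ w.leaves ⊆ v.leaves
  label_le : ∀ v ∈ F, ∀ w ∈ F, w.leaves ⊂ v.leaves → w.label ≤ v.label
  label_lt_or_lt : ∀ v ∈ F, ∀ w ∈ F, v ≠ w → v.leaves = w.leaves →
    v.label < w.label ∨ w.label < v.label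
  label_ne_bot : ∀ v ∈ F, ∀ l, v.leaves = {l} →
    (¬ ∃ w ∈ F, w ≠ v ∧ w.leaves = v.leaves ∧ w.label < v.label) → v.label ≠ ⊥
  top_chain : ∀ v ∈ F, ∀ w ∈ F, v.label = ⊤ → w.label = ⊤ → v = w ∨ v.below w ∨ w.below v

structure ForestAxioms (ρ : Representation ℂ G V) (F : Set (FVertex n G)) : Prop
    extends LabelAxioms ρ F where
  coset_eq_smul : ∀ v ∈ F, ∀ l ∈ v.leaves, ∃ a : G, v.coset l = a • (v.label : Set G)
  coset_eq_empty : ∀ v ∈ F, ∀ l, l ∉ v.leaves → v.coset l = ∅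
  edge : ∀ v ∈ F, ∀ w ∈ F, IsDirectChild F w v → ∃ a : G, w.label ≤ v.label ∧
    (∀ l ∈ w.leaves, v.coset l = w.coset l * (a • (v.label : Set G))) ∧
    (∀ hv : v.leaves.Nonempty, v.leaves.min' hv ∈ w.leaves → a ∈ v.label)
  coset_min' : ∀ v ∈ F, ∀ hv : v.leaves.Nonempty,
    v.coset (v.leaves.min' hv) = (v.label : Set G)

theorem isFGForest_iff_forestAxioms {ρ : Representation ℂ G V} {F : Set (FVertex n G)} :
    IsFGForest ρ F ↔ ForestAxioms ρ F := by
  simp only [IsFGForest, conjLE_iff_le, conjLT_iff_lt, Subgroup.map_conj_eq_self]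
  exact ⟨fun ⟨h₁, h₂, h₃, h₄, h₅, h₆, h₇, h₈, h₉, h₁₀, h₁₁, h₁₂, h₁₃⟩ =>
      ⟨⟨h₁, h₂, h₃, h₄, h₅, h₆, h₇, h₈, h₉⟩, h₁₀, h₁₁, h₁₂, h₁₃⟩,
    fun ⟨⟨h₁, h₂, h₃, h₄, h₅, h₆, h₇, h₈, h₉⟩, h₁₀, h₁₁, h₁₂, h₁₃⟩ =>
      ⟨h₁, h₂, h₃, h₄, h₅, h₆, h₇, h₈, h₉, h₁₀, h₁₁, h₁₂, h₁₃⟩⟩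

variable {ρ : Representation ℂ G V} {F : Set (FVertex n G)}

theorem exists_mem_rootsOf_eq_or_below (hF : F.Finite) {u : FVertex n G} (hu : u ∈ F) :
    ∃ r ∈ rootsOf F, u = r ∨ u.below r := by
  induction hk : {v ∈ F | u.below v}.ncard using Nat.strong_induction_on generalizing u with
  | _ k ih =>
  by_cases h : ∃ w ∈ F, u.below w
  · obtain ⟨w, hw, huw⟩ := h
    have hss : {v ∈ F | w.below v} ⊂ {v ∈ F | u.below v} :=
      ⟨fun v hv => ⟨hv.1, below_trans huw hv.2⟩,
        fun hsub => below_irrefl w (hsub ⟨hw, huw⟩).2⟩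
    obtain ⟨r, hr, hwr⟩ := ih _ (hk ▸ Set.ncard_lt_ncard hss (hF.subset fun _ h => h.1)) hw rfl
    exact ⟨r, hr, Or.inr (hwr.elim (· ▸ huw) (below_trans huw))⟩
  · simp only [not_exists, not_and] at h
    exact ⟨u, ⟨hu, h⟩, Or.inl rfl⟩

theorem rootsOf_eq_singleton {r : FVertex n G} (hr : r ∈ F)
    (hbelow : ∀ u ∈ F, u = r ∨ u.below r) : rootsOf F = {r} := by
  ext u
  refine ⟨fun hu => (hbelow u hu.1).resolve_right (hu.2 r hr), fun hu => ?_⟩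
  rw [Set.mem_singleton_iff.1 hu]
  refine ⟨hr, fun v hv hrv => ?_⟩
  rcases hbelow v hv with rfl | hvr
  exacts [below_irrefl _ hrv, below_irrefl _ (below_trans hrv hvr)]

theorem eq_or_below_of_rootsOf_eq_singleton (hF : F.Finite) {r : FVertex n G}
    (hroots : rootsOf F = {r}) {u : FVertex n G} (hu : u ∈ F) : u = r ∨ u.below r := by
  obtain ⟨r', hr', hur'⟩ := exists_mem_rootsOf_eq_or_below hF hu
  rw [hroots, Set.mem_singleton_iff] at hr'
  exact hr' ▸ hur'

theorem fallenLeaves_eq_empty_iff :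
    fallenLeaves F = ∅ ↔ ∀ l, ∃ v ∈ F, l ∈ v.leaves := by
  simp [fallenLeaves, Finset.filter_eq_empty_iff]

theorem leaves_eq_univ_of_rootsOf_eq_singleton (hF : F.Finite) {r : FVertex n G}
    (hroots : rootsOf F = {r}) (hfall : fallenLeaves F = ∅) : r.leaves = Finset.univ :=
  Finset.eq_univ_of_forall fun l => by
    obtain ⟨v, hv, hl⟩ := fallenLeaves_eq_empty_iff.1 hfall l
    exact (eq_or_below_of_rootsOf_eq_singleton hF hroots hv).elim (· ▸ hl)
      fun h => leaves_subset_of_below h hl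

namespace LabelAxioms

theorem eq_of_leaves_eq (hF : LabelAxioms ρ F) {v w : FVertex n G} (hv : v ∈ F) (hw : w ∈ F)
    (hleaves : v.leaves = w.leaves) (hlabel : v.label = w.label) : v = w := by
  by_contra hne
  rcases hF.label_lt_or_lt v hv w hw hne hleaves with h | h <;> exact h.ne (by rw [hlabel])

theorem below_or_below (hF : LabelAxioms ρ F) {v w : FVertex n G} (hv : v ∈ F) (hw : w ∈ F)
    (hne : v ≠ w) (hvw : (v.leaves ∩ w.leaves).Nonempty) : v.below w ∨ w.below v := by
  by_cases hleaves : v.leaves = w.leaves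
  · rcases hF.label_lt_or_lt v hv w hw hne hleaves with h | h
    exacts [Or.inl (below_iff.2 (Or.inr ⟨hleaves, h⟩)),
      Or.inr (below_iff.2 (Or.inr ⟨hleaves.symm, h⟩))]
  · rcases hF.laminar v hv w hw hvw with h | h
    exacts [Or.inl (below_iff.2 (Or.inl (h.ssubset_of_ne hleaves))),
      Or.inr (below_iff.2 (Or.inl (h.ssubset_of_ne (Ne.symm hleaves))))]

theorem disjoint_of_mem_rootsOf (hF : LabelAxioms ρ F) {v w : FVertex n G}
    (hv : v ∈ rootsOf F) (hw : w ∈ rootsOf F) (hne : v ≠ w) : Disjoint v.leaves w.leaves := by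
  by_contra hvw
  rw [Finset.not_disjoint_iff_nonempty_inter] at hvw
  rcases hF.below_or_below hv.1 hw.1 hne hvw with h | h
  exacts [hv.2 w hw.1 h, hw.2 v hv.1 h]

theorem label_le_of_below (hF : LabelAxioms ρ F) {v w : FVertex n G} (hv : v ∈ F) (hw : w ∈ F)
    (hvw : v.below w) : v.label ≤ w.label :=
  (below_iff.1 hvw).elim (hF.label_le w hw v hv) fun h => h.2.le

theorem subset_or_disjoint_of_not_below (hF : LabelAxioms ρ F) {v w : FVertex n G} (hv : v ∈ F)
    (hw : w ∈ F) (hvw : ¬ v.below w) : w.leaves ⊆ v.leaves ∨ Disjoint v.leaves w.leaves := by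
  by_cases h : (v.leaves ∩ w.leaves).Nonempty
  · refine Or.inl ((hF.laminar v hv w hw h).elim (fun hsub => ?_) id)
    rcases hsub.eq_or_ssubset with heq | hss
    exacts [heq.ge, absurd (below_iff.2 (Or.inl hss)) hvw]
  · exact Or.inr (Finset.disjoint_iff_inter_eq_empty.2 (Finset.not_nonempty_iff_eq_empty.1 h))

/-- `hsingle` excludes that removing vertices turns a vertex labelled `⊥` into one whose only
child is a leaf. -/
theorem of_subset (hF : LabelAxioms ρ F) {A : Set (FVertex n G)} (hAF : A ⊆ F)
    (hA : A.Nonempty)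
    (hsingle : ∀ v ∈ A, ∀ w ∈ F, w.below v → w.leaves = v.leaves → w ∈ A ∨ v.label ≠ ⊥) :
    LabelAxioms ρ A where
  finite := hF.finite.subset hAF
  nonempty := hA
  leaves_nonempty v hv := hF.leaves_nonempty v (hAF hv)
  isClosed v hv := hF.isClosed v (hAF hv)
  laminar v hv w hw := hF.laminar v (hAF hv) w (hAF hw)
  label_le v hv w hw := hF.label_le v (hAF hv) w (hAF hw)
  label_lt_or_lt v hv w hw := hF.label_lt_or_lt v (hAF hv) w (hAF hw)
  label_ne_bot v hv l hl hnone := by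
    intro hbot
    refine hF.label_ne_bot v (hAF hv) l hl (fun ⟨w, hw, hne, hleaves, hlt⟩ => ?_) hbot
    rcases hsingle v hv w hw (below_iff.2 (Or.inr ⟨hleaves, hlt⟩)) hleaves with hwA | hne_bot
    exacts [hnone ⟨w, hwA, hne, hleaves, hlt⟩, hne_bot hbot]
  top_chain v hv w hw := hF.top_chain v (hAF hv) w (hAF hw)

end LabelAxioms

namespace ForestAxioms

theorem of_subset (hF : ForestAxioms ρ F) {A : Set (FVertex n G)} (hAF : A ⊆ F)
    (hA : A.Nonempty)
    (hbetween : ∀ u ∈ A, ∀ z ∈ F, ∀ v ∈ A, u.below z → z.below v → z ∈ A)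
    (hsingle : ∀ v ∈ A, ∀ w ∈ F, w.below v → w.leaves = v.leaves → w ∈ A ∨ v.label ≠ ⊥) :
    ForestAxioms ρ A where
  toLabelAxioms := hF.toLabelAxioms.of_subset hAF hA hsingle
  coset_eq_smul v hv := hF.coset_eq_smul v (hAF hv)
  coset_eq_empty v hv := hF.coset_eq_empty v (hAF hv)
  edge v hv w hw hvw := hF.edge v (hAF hv) w (hAF hw)
    ⟨hvw.1, fun ⟨z, hz, hwz, hzv⟩ => hvw.2 ⟨z, hbetween w hw z hz v hv hwz hzv, hwz, hzv⟩⟩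
  coset_min' v hv := hF.coset_min' v (hAF hv)

theorem exists_coset_eq_mul_of_below (hF : ForestAxioms ρ F) {u v : FVertex n G} (hu : u ∈ F)
    (hv : v ∈ F) (huv : u.below v) :
    ∃ a : G, ∀ l ∈ u.leaves, v.coset l = u.coset l * (a • (v.label : Set G)) := by
  induction hk : {z ∈ F | z.below v}.ncard using Nat.strong_induction_on generalizing v with
  | _ k ih =>
  -- a maximal vertex `r` strictly between `u` (inclusive) and `v` is a child of `v`
  obtain ⟨r, ⟨⟨hr, hur, hrv⟩, hrmax⟩, -⟩ := exists_mem_rootsOf_eq_or_below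
    (hF.finite.subset fun z (hz : z ∈ {z ∈ F | (z = u ∨ u.below z) ∧ z.below v}) => hz.1)
    (⟨hu, Or.inl rfl, huv⟩ : u ∈ {z ∈ F | (z = u ∨ u.below z) ∧ z.below v})
  have hrv' : IsDirectChild F r v := ⟨hrv, fun ⟨z, hz, hrz, hzv⟩ =>
    hrmax z ⟨hz, Or.inr (hur.elim (· ▸ hrz) fun h => below_trans h hrz), hzv⟩ hrz⟩
  obtain ⟨a, hle, hcoset, -⟩ := hF.edge v hv r hr hrv'
  rcases hur with rfl | hur
  · exact ⟨a, hcoset⟩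
  have hlt : {z ∈ F | z.below r}.ncard < k := hk ▸ Set.ncard_lt_ncard
    ⟨fun z hz => ⟨hz.1, below_trans hz.2 hrv⟩,
      fun h => below_irrefl r (h ⟨hr, hrv⟩).2⟩ (hF.finite.subset fun _ h => h.1)
  obtain ⟨b, hb⟩ := ih _ hlt hr hur rfl
  refine ⟨b * a, fun l hl => ?_⟩
  rw [hcoset l (leaves_subset_of_below hur hl), hb l hl, mul_assoc,
    smul_coe_mul_smul_coe hle]

theorem coset_eq_mul_coset_min' (hF : ForestAxioms ρ F) {w v : FVertex n G} (hw : w ∈ F)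
    (hv : v ∈ F) (hwv : w.below v) (hne : w.leaves.Nonempty) {l : Fin n} (hl : l ∈ w.leaves) :
    v.coset l = w.coset l * v.coset (w.leaves.min' hne) := by
  obtain ⟨a, ha⟩ := hF.exists_coset_eq_mul_of_below hw hv hwv
  rw [ha l hl, ha _ (Finset.min'_mem _ hne), hF.coset_min' w hw hne,
    coe_mul_smul_coe (hF.label_le_of_below hw hv hwv)]

end ForestAxioms

end Forest

section Transport

variable {m n : ℕ} {ρ : Representation ℂ G V} {C : Set (FVertex n G)}

theorem FVertex.below_iff_of_leaves_subset_iff {u v : FVertex n G} {u' v' : FVertex m G}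
    (huv : u'.leaves ⊆ v'.leaves ↔ u.leaves ⊆ v.leaves)
    (hvu : v'.leaves ⊆ u'.leaves ↔ v.leaves ⊆ u.leaves) (hu : u'.label = u.label)
    (hv : v'.label = v.label) : u'.below v' ↔ u.below v := by
  simp only [below_iff, ssubset_iff_subset_not_subset, subset_antisymm_iff, huv, hvu, hu, hv]

theorem isDirectChild_image_iff {φ : FVertex n G → FVertex m G}
    (hbelow : ∀ u ∈ C, ∀ v ∈ C, (φ u).below (φ v) ↔ u.below v) {v w : FVertex n G}
    (hv : v ∈ C) (hw : w ∈ C) : IsDirectChild (φ '' C) (φ w) (φ v) ↔ IsDirectChild C w v := by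
  rw [IsDirectChild, IsDirectChild, hbelow w hw v hv, Set.exists_mem_image]
  refine and_congr_right' (not_congr ⟨fun ⟨u, hu, h⟩ => ⟨u, hu, ?_⟩, fun ⟨u, hu, h⟩ => ⟨u, hu, ?_⟩⟩)
  · rwa [hbelow w hw u hu, hbelow u hu v hv] at h
  · rwa [hbelow w hw u hu, hbelow u hu v hv]

theorem LabelAxioms.image (hC : LabelAxioms ρ C) (φ : FVertex n G → FVertex m G)
    (hlabel : ∀ v, (φ v).label = v.label)
    (hsub : ∀ u ∈ C, ∀ v ∈ C, (φ u).leaves ⊆ (φ v).leaves ↔ u.leaves ⊆ v.leaves)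
    (hinter : ∀ u ∈ C, ∀ v ∈ C,
      ((φ u).leaves ∩ (φ v).leaves).Nonempty ↔ (u.leaves ∩ v.leaves).Nonempty)
    (hsingle : ∀ v ∈ C, ∀ l, (φ v).leaves = {l} → v.label ≠ ⊥ ∨ ∃ k, v.leaves = {k}) :
    LabelAxioms ρ (φ '' C) := by
  have heq : ∀ u ∈ C, ∀ v ∈ C, (φ u).leaves = (φ v).leaves ↔ u.leaves = v.leaves :=
    fun u hu v hv => by simp only [subset_antisymm_iff, hsub u hu v hv, hsub v hv u hu]
  have hbelow : ∀ u ∈ C, ∀ v ∈ C, (φ u).below (φ v) ↔ u.below v := fun u hu v hv =>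
    below_iff_of_leaves_subset_iff (hsub u hu v hv) (hsub v hv u hu) (hlabel u) (hlabel v)
  exact {
    finite := hC.finite.image φ
    nonempty := hC.nonempty.image φ
    leaves_nonempty := by
      rintro _ ⟨v, hv, rfl⟩
      simpa using (hinter v hv v hv).2 (by simpa using hC.leaves_nonempty v hv)
    isClosed := by
      rintro _ ⟨v, hv, rfl⟩
      rw [hlabel]
      exact hC.isClosed v hv
    laminar := by
      rintro _ ⟨u, hu, rfl⟩ _ ⟨v, hv, rfl⟩ h
      rw [hsub u hu v hv, hsub v hv u hu]
      exact hC.laminar u hu v hv ((hinter u hu v hv).1 h)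
    label_le := by
      rintro _ ⟨v, hv, rfl⟩ _ ⟨w, hw, rfl⟩ h
      rw [ssubset_iff_subset_not_subset, hsub w hw v hv, hsub v hv w hw,
        ← ssubset_iff_subset_not_subset] at h
      rw [hlabel, hlabel]
      exact hC.label_le v hv w hw h
    label_lt_or_lt := by
      rintro _ ⟨u, hu, rfl⟩ _ ⟨v, hv, rfl⟩ huv h
      rw [hlabel, hlabel]
      exact hC.label_lt_or_lt u hu v hv (fun h => huv (h ▸ rfl)) ((heq u hu v hv).1 h)
    label_ne_bot := by
      rintro _ ⟨v, hv, rfl⟩ l hl hnone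
      rw [hlabel]
      refine (hsingle v hv l hl).elim id fun ⟨k, hk⟩ => hC.label_ne_bot v hv k hk
        fun ⟨w, hw, _, hleaves, hlt⟩ => hnone ⟨φ w, ⟨w, hw, rfl⟩, fun h => hlt.ne ?_,
          (heq w hw v hv).2 hleaves, by rwa [hlabel, hlabel]⟩
      rw [← hlabel w, h, hlabel]
    top_chain := by
      rintro _ ⟨u, hu, rfl⟩ _ ⟨v, hv, rfl⟩ hut hvt
      rw [hlabel] at hut hvt
      rw [hbelow u hu v hv, hbelow v hv u hu]
      exact (hC.top_chain u hu v hv hut hvt).imp_left (congrArg φ) }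

end Transport

section Trees

variable {n : ℕ} {ρ : Representation ℂ G V}

structure IsTreeOn (ρ : Representation ℂ G V) (H : Subgroup G) (S : Finset (Fin n))
    (A : Set (FVertex n G)) : Prop where
  forest : ForestAxioms ρ A
  label_eq : ∀ v ∈ A, v.label = H
  leaves_subset : ∀ v ∈ A, v.leaves ⊆ S
  exists_root : ∃ r ∈ A, r.leaves = S

theorem isHTree_iff_isTreeOn_univ {H : Subgroup G} {F : Set (FVertex n G)} :
    IsHTree ρ H F ↔ IsTreeOn ρ H Finset.univ F := by
  rw [IsHTree, isFGForest_iff_forestAxioms]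
  exact ⟨fun ⟨hF, hlab, hroot⟩ => ⟨hF, hlab, fun _ _ => Finset.subset_univ _, hroot⟩,
    fun ⟨hF, hlab, _, hroot⟩ => ⟨hF, hlab, hroot⟩⟩

namespace IsTreeOn

variable {H : Subgroup G} {S : Finset (Fin n)} {A : Set (FVertex n G)}

theorem eq_or_below (hA : IsTreeOn ρ H S A) {r : FVertex n G} (hr : r ∈ A)
    (hrS : r.leaves = S) {u : FVertex n G} (hu : u ∈ A) : u = r ∨ u.below r := by
  rcases (hA.leaves_subset u hu).eq_or_ssubset with heq | hss
  · exact Or.inl (hA.forest.eq_of_leaves_eq hu hr (heq.trans hrS.symm)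
      ((hA.label_eq u hu).trans (hA.label_eq r hr).symm))
  · exact Or.inr (below_iff.2 (Or.inl (hrS ▸ hss)))

theorem rootsOf_eq (hA : IsTreeOn ρ H S A) {r : FVertex n G} (hr : r ∈ A)
    (hrS : r.leaves = S) : rootsOf A = {r} :=
  rootsOf_eq_singleton hr fun _ hu => hA.eq_or_below hr hrS hu

theorem leafSet_eq {H' : Subgroup G} {S' : Finset (Fin n)} (hA : IsTreeOn ρ H S A)
    (hA' : IsTreeOn ρ H' S' A) : S = S' := by
  obtain ⟨r, hr, rfl⟩ := hA.exists_root
  obtain ⟨r', hr', rfl⟩ := hA'.exists_root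
  exact (hA'.leaves_subset r hr).antisymm (hA.leaves_subset r' hr')

noncomputable def root (hA : IsTreeOn ρ H S A) : FVertex n G := hA.exists_root.choose

theorem root_mem (hA : IsTreeOn ρ H S A) : hA.root ∈ A := hA.exists_root.choose_spec.1

theorem root_leaves (hA : IsTreeOn ρ H S A) : hA.root.leaves = S :=
  hA.exists_root.choose_spec.2

theorem eq_root (hA : IsTreeOn ρ H S A) {r : FVertex n G} (hr : r ∈ A) (hrS : r.leaves = S) :
    r = hA.root :=
  hA.forest.eq_of_leaves_eq hr hA.root_mem (hrS.trans hA.root_leaves.symm)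
    ((hA.label_eq r hr).trans (hA.label_eq _ hA.root_mem).symm)

end IsTreeOn

def subtree (F : Set (FVertex n G)) (r : FVertex n G) : Set (FVertex n G) :=
  {u | u ∈ F ∧ (u = r ∨ u.below r)}

theorem leaves_subset_of_mem_subtree {F : Set (FVertex n G)} {r u : FVertex n G}
    (hu : u ∈ subtree F r) : u.leaves ⊆ r.leaves := by
  rcases hu.2 with rfl | h
  exacts [subset_rfl, leaves_subset_of_below h]

theorem isTreeOn_subtree {F : Set (FVertex n G)} (hF : ForestAxioms ρ F) {H : Subgroup G}
    {r : FVertex n G} (hr : r ∈ F) (hlab : ∀ u ∈ subtree F r, u.label = H) :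
    IsTreeOn ρ H r.leaves (subtree F r) := by
  have hdown : ∀ u ∈ F, ∀ v ∈ subtree F r, u.below v → u ∈ subtree F r :=
    fun u hu v hv huv => ⟨hu, Or.inr (hv.2.elim (· ▸ huv) (below_trans huv))⟩
  refine ⟨hF.of_subset (fun u hu => hu.1) ⟨r, hr, Or.inl rfl⟩
    (fun _ _ z hz v hv _ hzv => hdown z hz v hv hzv)
    (fun v hv w hw hwv _ => Or.inl (hdown w hw v hv hwv)), hlab,
    fun _ hu => leaves_subset_of_mem_subtree hu, r, ⟨hr, Or.inl rfl⟩, rfl⟩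

end Trees

/-! ### Relabelling leaves, and counting trees with a given leaf set -/

namespace FVertex

section Relabel

variable {Γ : Type*} [Group Γ] {m n : ℕ}

def push (e : Fin m ↪o Fin n) (v : FVertex m Γ) : FVertex n Γ where
  leaves := v.leaves.map e.toEmbedding
  label := v.label
  coset l := ⋃ (k : Fin m) (_ : e k = l), v.coset k

noncomputable def pull (e : Fin m ↪o Fin n) (v : FVertex n Γ) : FVertex m Γ where
  leaves := v.leaves.preimage e e.injective.injOn
  label := v.label
  coset k := v.coset (e k)

variable {e : Fin m ↪o Fin n}

@[simp]
theorem push_leaves (v : FVertex m Γ) : (push e v).leaves = v.leaves.map e.toEmbedding := rfl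

@[simp]
theorem push_label (v : FVertex m Γ) : (push e v).label = v.label := rfl

@[simp]
theorem push_coset_apply (v : FVertex m Γ) (k : Fin m) : (push e v).coset (e k) = v.coset k := by
  ext
  simp [push]

theorem push_coset_of_notMem_range (v : FVertex m Γ) {l : Fin n} (hl : l ∉ Set.range e) :
    (push e v).coset l = ∅ := by
  ext
  simp only [push, Set.mem_iUnion, Set.mem_empty_iff_false, iff_false]
  rintro ⟨k, rfl, -⟩
  exact hl ⟨k, rfl⟩

theorem mem_push_leaves {v : FVertex m Γ} {k : Fin m} :
    e k ∈ (push e v).leaves ↔ k ∈ v.leaves :=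
  Finset.mem_map' e.toEmbedding

theorem pull_push (v : FVertex m Γ) : pull e (push e v) = v := by
  ext : 1
  · ext k
    simp [pull]
  · rfl
  · funext k
    exact push_coset_apply v k

theorem push_pull {v : FVertex n Γ} (hleaves : ∀ l ∈ v.leaves, l ∈ Set.range e)
    (hcoset : ∀ l ∉ v.leaves, v.coset l = ∅) : push e (pull e v) = v := by
  ext : 1
  · ext l
    simp only [push_leaves, pull, Finset.mem_map, Finset.mem_preimage]
    refine ⟨fun ⟨k, hk, hkl⟩ => hkl ▸ hk, fun hl => ?_⟩
    obtain ⟨k, rfl⟩ := hleaves l hl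
    exact ⟨k, hl, rfl⟩
  · rfl
  · funext l
    by_cases hl : l ∈ Set.range e
    · obtain ⟨k, rfl⟩ := hl
      exact push_coset_apply _ k
    · rw [push_coset_of_notMem_range _ hl, hcoset l fun h => hl (hleaves l h)]

theorem push_below_push_iff {v w : FVertex m Γ} : (push e v).below (push e w) ↔ v.below w := by
  simp [FVertex.below, Finset.ssubset_iff_subset_ne, Finset.map_subset_map]

theorem min'_push_leaves {v : FVertex m Γ} (hv : v.leaves.Nonempty)
    (hv' : (push e v).leaves.Nonempty) : (push e v).leaves.min' hv' = e (v.leaves.min' hv) := by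
  simp only [push_leaves, Finset.map_eq_image]
  exact Finset.min'_image e.monotone _ _

end Relabel

end FVertex

section RelabelForest

variable {m n : ℕ} {ρ : Representation ℂ G V} {e : Fin m ↪o Fin n} {F : Set (FVertex m G)}

theorem LabelAxioms.image_push (hF : LabelAxioms ρ F) : LabelAxioms ρ (push e '' F) :=
  hF.image (push e) (fun _ => rfl) (fun _ _ _ _ => Finset.map_subset_map)
    (fun _ _ _ _ => by simp [← Finset.map_inter])
    fun _ _ _ hl => Or.inr ((Finset.map_eq_singleton_iff.1 hl).imp fun _ h => h.1)

theorem LabelAxioms.of_image_push (hF : LabelAxioms ρ (push e '' F)) : LabelAxioms ρ F := by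
  have h := hF.image (pull e) (fun _ => rfl) ?_ ?_ ?_
  · rwa [Set.image_image, Set.image_congr fun v _ => pull_push v, Set.image_id'] at h
  · rintro _ ⟨u, -, rfl⟩ _ ⟨v, -, rfl⟩
    simp [pull_push, Finset.map_subset_map]
  · rintro _ ⟨u, -, rfl⟩ _ ⟨v, -, rfl⟩
    simp [pull_push, ← Finset.map_inter]
  · rintro _ ⟨v, -, rfl⟩ l hl
    rw [pull_push] at hl
    exact Or.inr ⟨e l, by simp [hl]⟩

namespace ForestAxioms

theorem image_push (hF : ForestAxioms ρ F) : ForestAxioms ρ (push e '' F) where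
  toLabelAxioms := hF.toLabelAxioms.image_push
  coset_eq_smul := by
    rintro _ ⟨v, hv, rfl⟩ _ hl
    obtain ⟨k, hk, rfl⟩ := Finset.mem_map.1 hl
    simpa using hF.coset_eq_smul v hv k hk
  coset_eq_empty := by
    rintro _ ⟨v, hv, rfl⟩ l hl
    by_cases hr : l ∈ Set.range e
    · obtain ⟨k, rfl⟩ := hr
      simpa using hF.coset_eq_empty v hv k (mt mem_push_leaves.2 hl)
    · exact push_coset_of_notMem_range v hr
  edge := by
    rintro _ ⟨v, hv, rfl⟩ _ ⟨w, hw, rfl⟩ hvw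
    obtain ⟨a, hle, hcoset, hmin⟩ := hF.edge v hv w hw
      ((isDirectChild_image_iff (fun _ _ _ _ => push_below_push_iff) hv hw).1 hvw)
    refine ⟨a, hle, ?_, fun hv' hvw' => hmin (by simpa using hv') ?_⟩
    · intro _ hl
      obtain ⟨k, hk, rfl⟩ := Finset.mem_map.1 hl
      simpa using hcoset k hk
    · rwa [min'_push_leaves (by simpa using hv'), mem_push_leaves] at hvw'
  coset_min' := by
    rintro _ ⟨v, hv, rfl⟩ hv'
    rw [min'_push_leaves (by simpa using hv')]
    simpa using hF.coset_min' v hv _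

theorem of_image_push (hF : ForestAxioms ρ (push e '' F)) : ForestAxioms ρ F where
  toLabelAxioms := hF.toLabelAxioms.of_image_push
  coset_eq_smul v hv k hk := by
    simpa using hF.coset_eq_smul _ ⟨v, hv, rfl⟩ (e k) (mem_push_leaves.2 hk)
  coset_eq_empty v hv k hk := by
    simpa using hF.coset_eq_empty _ ⟨v, hv, rfl⟩ (e k) (mt mem_push_leaves.1 hk)
  edge v hv w hw hvw := by
    obtain ⟨a, hle, hcoset, hmin⟩ :=
      hF.edge _ ⟨v, hv, rfl⟩ _ ⟨w, hw, rfl⟩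
        ((isDirectChild_image_iff (fun _ _ _ _ => push_below_push_iff) hv hw).2 hvw)
    refine ⟨a, hle, fun k hk => by simpa using hcoset (e k) (mem_push_leaves.2 hk),
      fun hv' hvw' => hmin (by simpa using hv') ?_⟩
    rwa [min'_push_leaves hv', mem_push_leaves]
  coset_min' v hv hv' := by
    have := hF.coset_min' _ ⟨v, hv, rfl⟩ (by simpa using hv')
    rwa [min'_push_leaves hv', push_coset_apply] at this

end ForestAxioms

end RelabelForest

section TreeCount

variable {m n : ℕ} {ρ : Representation ℂ G V} {H : Subgroup G}

theorem isTreeOn_image_push_iff {e : Fin m ↪o Fin n} {F : Set (FVertex m G)} :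
    IsTreeOn ρ H (Finset.univ.map e.toEmbedding) (push e '' F) ↔
      IsTreeOn ρ H Finset.univ F := by
  refine ⟨fun ⟨hF, hlab, _, hroot⟩ => ?_, fun ⟨hF, hlab, _, hroot⟩ => ?_⟩
  · obtain ⟨_, ⟨r, hr, rfl⟩, hrS⟩ := hroot
    exact ⟨hF.of_image_push, fun v hv => hlab _ ⟨v, hv, rfl⟩, fun _ _ => Finset.subset_univ _,
      r, hr, Finset.map_inj.1 hrS⟩
  · obtain ⟨r, hr, hrS⟩ := hroot
    refine ⟨hF.image_push, ?_, ?_, push e r, ⟨r, hr, rfl⟩, by simp [hrS]⟩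
    · rintro _ ⟨v, hv, rfl⟩
      exact hlab v hv
    · rintro _ ⟨v, -, rfl⟩
      exact Finset.map_subset_map.2 (Finset.subset_univ _)

theorem image_push_image_pull {e : Fin m ↪o Fin n} {A : Set (FVertex n G)}
    (hA : ForestAxioms ρ A) (hleaves : ∀ v ∈ A, ∀ l ∈ v.leaves, l ∈ Set.range e) :
    push e '' (pull e '' A) = A := by
  rw [Set.image_image]
  exact (Set.image_congr fun v hv => push_pull (hleaves v hv) (hA.coset_eq_empty v hv)).trans
    (Set.image_id' A)

noncomputable def isTreeOnEquivIsHTree (ρ : Representation ℂ G V) (H : Subgroup G)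
    {S : Finset (Fin n)} (hS : S.card = m) :
    {A : Set (FVertex n G) // IsTreeOn ρ H S A} ≃ {F : Set (FVertex m G) // IsHTree ρ H F} :=
  have hpp : ∀ A, IsTreeOn ρ H S A →
      push (S.orderEmbOfFin hS) '' (pull (S.orderEmbOfFin hS) '' A) = A :=
    fun A hA => image_push_image_pull hA.forest fun v hv _ hl => by
      simpa using hA.leaves_subset v hv hl
  { toFun A := ⟨pull (S.orderEmbOfFin hS) '' A.1, isHTree_iff_isTreeOn_univ.2
      (isTreeOn_image_push_iff.1 (by rw [hpp _ A.2, S.map_orderEmbOfFin_univ]; exact A.2))⟩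
    invFun F := ⟨push (S.orderEmbOfFin hS) '' F.1, by
      simpa using isTreeOn_image_push_iff (e := S.orderEmbOfFin hS).2
        (isHTree_iff_isTreeOn_univ.1 F.2)⟩
    left_inv A := Subtype.ext (hpp _ A.2)
    right_inv F := Subtype.ext (by simp [Set.image_image, pull_push]) }

theorem card_sigma_isTreeOn_prod {N k a b : ℕ} (K : Subgroup G)
    (f g : {S : Finset (Fin N) // S.card = k} → Finset (Fin N)) (hf : ∀ S, (f S).card = a)
    (hg : ∀ S, (g S).card = b) :
    Nat.card (Σ S : {S : Finset (Fin N) // S.card = k},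
      {A // IsTreeOn ρ K (f S) A} × {B // IsTreeOn ρ H (g S) B}) =
      N.choose k * lamHT ρ K a * lamHT ρ H b := by
  rw [Nat.card_congr ((Equiv.sigmaCongrRight fun S => (isTreeOnEquivIsHTree ρ K (hf S)).prodCongr
    (isTreeOnEquivIsHTree ρ H (hg S))).trans (Equiv.sigmaEquivProd _ _)), Nat.card_prod,
    Nat.card_prod, Nat.card_eq_fintype_card, Fintype.card_finset_len, Fintype.card_fin, lamHT,
    lamHT, mul_assoc]

end TreeCount

/-! ### Part (a): two trees side by side -/

section Union

variable {n : ℕ} {ρ : Representation ℂ G V} {A B : Set (FVertex n G)}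

theorem IsDirectChild.mono {F F' : Set (FVertex n G)} {v w : FVertex n G}
    (h : IsDirectChild F w v) (hF : F' ⊆ F) : IsDirectChild F' w v :=
  ⟨h.1, fun ⟨u, hu, hwu, huv⟩ => h.2 ⟨u, hF hu, hwu, huv⟩⟩

theorem rootsOf_union (hAB : ∀ a ∈ A, ∀ b ∈ B, ¬ a.below b ∧ ¬ b.below a) :
    rootsOf (A ∪ B) = rootsOf A ∪ rootsOf B := by
  ext v
  simp only [rootsOf, Set.mem_ofPred_eq, Set.mem_union]
  constructor
  · rintro ⟨hv | hv, h⟩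
    exacts [Or.inl ⟨hv, fun w hw => h w (Or.inl hw)⟩, Or.inr ⟨hv, fun w hw => h w (Or.inr hw)⟩]
  · rintro (⟨hv, h⟩ | ⟨hv, h⟩)
    · exact ⟨Or.inl hv, fun w hw => hw.elim (h w) fun hw => (hAB v hv w hw).1⟩
    · exact ⟨Or.inr hv, fun w hw => hw.elim (fun hw => (hAB w hw v hv).2) (h w)⟩

theorem mem_same_side_of_inter_nonempty (hAB : ∀ a ∈ A, ∀ b ∈ B, Disjoint a.leaves b.leaves)
    {u w : FVertex n G} (hu : u ∈ A ∪ B) (hw : w ∈ A ∪ B) (h : (u.leaves ∩ w.leaves).Nonempty) :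
    (u ∈ A ∧ w ∈ A) ∨ (u ∈ B ∧ w ∈ B) := by
  rcases hu with hu | hu <;> rcases hw with hw | hw
  · exact Or.inl ⟨hu, hw⟩
  · exact absurd (hAB u hu w hw) (Finset.not_disjoint_iff_nonempty_inter.2 h)
  · exact absurd (hAB w hw u hu).symm (Finset.not_disjoint_iff_nonempty_inter.2 h)
  · exact Or.inr ⟨hu, hw⟩

theorem LabelAxioms.union (hA : LabelAxioms ρ A) (hB : LabelAxioms ρ B)
    (hAB : ∀ a ∈ A, ∀ b ∈ B, Disjoint a.leaves b.leaves) (htop : ∀ a ∈ A, a.label ≠ ⊤) :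
    LabelAxioms ρ (A ∪ B) := by
  have hnonempty : ∀ u ∈ A ∪ B, u.leaves.Nonempty := by
    rintro u (hu | hu)
    exacts [hA.leaves_nonempty u hu, hB.leaves_nonempty u hu]
  have hsub : ∀ u ∈ A ∪ B, ∀ w ∈ A ∪ B, u.leaves ⊆ w.leaves →
      (u ∈ A ∧ w ∈ A) ∨ (u ∈ B ∧ w ∈ B) := fun u hu w hw h =>
    mem_same_side_of_inter_nonempty hAB hu hw
      (by rw [Finset.inter_eq_left.2 h]; exact hnonempty u hu)
  exact {
    finite := hA.finite.union hB.finite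
    nonempty := hA.nonempty.mono Set.subset_union_left
    leaves_nonempty := hnonempty
    isClosed := by
      rintro v (hv | hv)
      exacts [hA.isClosed v hv, hB.isClosed v hv]
    laminar := fun v hv w hw h => (mem_same_side_of_inter_nonempty hAB hv hw h).elim
      (fun ⟨hv, hw⟩ => hA.laminar v hv w hw h) fun ⟨hv, hw⟩ => hB.laminar v hv w hw h
    label_le := fun v hv w hw h => (hsub w hw v hv h.subset).elim
      (fun ⟨hw, hv⟩ => hA.label_le v hv w hw h) fun ⟨hw, hv⟩ => hB.label_le v hv w hw h
    label_lt_or_lt := fun v hv w hw hne h => (hsub v hv w hw h.subset).elim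
      (fun ⟨hv, hw⟩ => hA.label_lt_or_lt v hv w hw hne h)
      fun ⟨hv, hw⟩ => hB.label_lt_or_lt v hv w hw hne h
    label_ne_bot := by
      rintro v (hv | hv) l hl hnone
      · exact hA.label_ne_bot v hv l hl fun ⟨w, hw, h⟩ => hnone ⟨w, Or.inl hw, h⟩
      · exact hB.label_ne_bot v hv l hl fun ⟨w, hw, h⟩ => hnone ⟨w, Or.inr hw, h⟩
    top_chain := by
      rintro v (hv | hv) w (hw | hw) hvt hwt
      · exact hA.top_chain v hv w hw hvt hwt
      · exact absurd hvt (htop v hv)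
      · exact absurd hwt (htop w hw)
      · exact hB.top_chain v hv w hw hvt hwt }

theorem ForestAxioms.union (hA : ForestAxioms ρ A) (hB : ForestAxioms ρ B)
    (hAB : ∀ a ∈ A, ∀ b ∈ B, Disjoint a.leaves b.leaves) (htop : ∀ a ∈ A, a.label ≠ ⊤) :
    ForestAxioms ρ (A ∪ B) where
  toLabelAxioms := hA.toLabelAxioms.union hB.toLabelAxioms hAB htop
  coset_eq_smul := by
    rintro v (hv | hv)
    exacts [hA.coset_eq_smul v hv, hB.coset_eq_smul v hv]
  coset_eq_empty := by
    rintro v (hv | hv)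
    exacts [hA.coset_eq_empty v hv, hB.coset_eq_empty v hv]
  edge v hv w hw hvw := by
    have hwv : (w.leaves ∩ v.leaves).Nonempty := by
      rw [Finset.inter_eq_left.2 (leaves_subset_of_below hvw.1)]
      exact hw.elim (hA.leaves_nonempty w) (hB.leaves_nonempty w)
    rcases mem_same_side_of_inter_nonempty hAB hw hv hwv with ⟨hw, hv⟩ | ⟨hw, hv⟩
    exacts [hA.edge v hv w hw (hvw.mono Set.subset_union_left),
      hB.edge v hv w hw (hvw.mono Set.subset_union_right)]
  coset_min' := by
    rintro v (hv | hv)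
    exacts [hA.coset_min' v hv, hB.coset_min' v hv]

end Union

section TwoTrees

variable {ρ : Representation ℂ G V} {H K : Subgroup G} {i j : ℕ}

/-- The forests counted in part (a). -/
def IsTwoTreeForest (ρ : Representation ℂ G V) (K H : Subgroup G) (i j : ℕ)
    (F : Set (FVertex (i + j) G)) : Prop :=
  IsFGForest ρ F ∧
    ∃ v₁ ∈ F, ∃ v₂ ∈ F, v₁ ≠ v₂ ∧ rootsOf F = {v₁, v₂} ∧
      fallenLeaves F = ∅ ∧
      (∀ u ∈ F, (u = v₁ ∨ u.below v₁) → u.label = K) ∧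
      (∀ u ∈ F, (u = v₂ ∨ u.below v₂) → u.label = H) ∧
      v₁.leaves.card = i ∧ v₂.leaves.card = j

theorem card_compl_of_card_eq {S : Finset (Fin (i + j))} (hS : S.card = i) : Sᶜ.card = j := by
  rw [Finset.card_compl, Fintype.card_fin, hS, Nat.add_sub_cancel_left]

theorem sep_label_union_eq_left {n : ℕ} {A B : Set (FVertex n G)} (hHK : H ≠ K)
    (hA : ∀ v ∈ A, v.label = K) (hB : ∀ v ∈ B, v.label = H) :
    {u ∈ A ∪ B | u.label = K} = A := by
  ext u
  refine ⟨fun ⟨hu, hlab⟩ => hu.resolve_right fun hu => hHK ((hB u hu).symm.trans hlab),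
    fun hu => ⟨Or.inl hu, hA u hu⟩⟩

theorem isTwoTreeForest_union (hHK : H < K) (hKtop : K ≠ ⊤) {S : Finset (Fin (i + j))}
    (hS : S.card = i) {A B : Set (FVertex (i + j) G)} (hA : IsTreeOn ρ K S A)
    (hB : IsTreeOn ρ H Sᶜ B) : IsTwoTreeForest ρ K H i j (A ∪ B) := by
  obtain ⟨r₁, hr₁, hr₁S⟩ := hA.exists_root
  obtain ⟨r₂, hr₂, hr₂S⟩ := hB.exists_root
  have hdisj : ∀ a ∈ A, ∀ b ∈ B, Disjoint a.leaves b.leaves := fun a ha b hb =>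
    (disjoint_compl_right (a := S)).mono (hA.leaves_subset a ha) (hB.leaves_subset b hb)
  have hsep : ∀ a ∈ A, ∀ b ∈ B, ¬ b.leaves ⊆ a.leaves ∧ ¬ a.leaves ⊆ b.leaves :=
    fun a ha b hb => ⟨fun h => (hB.forest.leaves_nonempty b hb).ne_empty
      ((hdisj a ha b hb).symm.eq_bot_of_le h), fun h =>
        (hA.forest.leaves_nonempty a ha).ne_empty ((hdisj a ha b hb).eq_bot_of_le h)⟩
  have hroots : rootsOf (A ∪ B) = {r₁, r₂} := by
    rw [rootsOf_union fun a ha b hb => ⟨fun h => (hsep a ha b hb).2 (leaves_subset_of_below h),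
      fun h => (hsep a ha b hb).1 (leaves_subset_of_below h)⟩, hA.rootsOf_eq hr₁ hr₁S,
      hB.rootsOf_eq hr₂ hr₂S]
    rfl
  have hsub : ∀ {u r : FVertex (i + j) G}, u = r ∨ u.below r → u.leaves ⊆ r.leaves :=
    fun h => h.elim (· ▸ subset_rfl) leaves_subset_of_below
  refine ⟨isFGForest_iff_forestAxioms.2 (hA.forest.union hB.forest hdisj
      fun a ha => hA.label_eq a ha ▸ hKtop), r₁, Or.inl hr₁, r₂, Or.inr hr₂,
    fun h => hHK.ne' (by rw [← hA.label_eq r₁ hr₁, ← hB.label_eq r₂ hr₂, h]), hroots,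
    fallenLeaves_eq_empty_iff.2 fun l => ?_, ?_, ?_, by rw [hr₁S, hS],
    by rw [hr₂S, card_compl_of_card_eq hS]⟩
  · by_cases hl : l ∈ S
    exacts [⟨r₁, Or.inl hr₁, hr₁S ▸ hl⟩, ⟨r₂, Or.inr hr₂, hr₂S ▸ Finset.mem_compl.2 hl⟩]
  · rintro u (hu | hu) hur
    exacts [hA.label_eq u hu, absurd (hsub hur) (hsep r₁ hr₁ u hu).1]
  · rintro u (hu | hu) hur
    exacts [absurd (hsub hur) (hsep u hu r₂ hr₂).2, hB.label_eq u hu]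

theorem IsTwoTreeForest.exists_eq_union {F : Set (FVertex (i + j) G)}
    (hF : IsTwoTreeForest ρ K H i j F) :
    ∃ S : Finset (Fin (i + j)), S.card = i ∧ ∃ A B, IsTreeOn ρ K S A ∧ IsTreeOn ρ H Sᶜ B ∧
      F = A ∪ B := by
  obtain ⟨hF, v₁, hv₁, v₂, hv₂, hne, hroots, -, hlabK, hlabH, hi, hj⟩ := hF
  rw [isFGForest_iff_forestAxioms] at hF
  have hv₂S : v₂.leaves = v₁.leavesᶜ := by
    refine Finset.eq_of_subset_of_card_le (fun l hl => Finset.mem_compl.2 fun hl' => ?_)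
      (by rw [card_compl_of_card_eq hi, hj])
    refine Finset.disjoint_left.1 (hF.disjoint_of_mem_rootsOf ?_ ?_ hne) hl' hl <;>
      simp [hroots]
  refine ⟨v₁.leaves, hi, subtree F v₁, subtree F v₂,
    isTreeOn_subtree hF hv₁ fun u hu => hlabK u hu.1 hu.2,
    hv₂S ▸ isTreeOn_subtree hF hv₂ fun u hu => hlabH u hu.1 hu.2, ?_⟩
  ext u
  refine ⟨fun hu => ?_, fun hu => hu.elim (·.1) (·.1)⟩
  obtain ⟨r, hr, hur⟩ := exists_mem_rootsOf_eq_or_below hF.finite hu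
  rw [hroots] at hr
  rcases hr with rfl | rfl
  exacts [Or.inl ⟨hu, hur⟩, Or.inr ⟨hu, hur⟩]

theorem card_isTwoTreeForest_eq_card_sigma (hHK : H < K) (hKtop : K ≠ ⊤) :
    Nat.card {F // IsTwoTreeForest ρ K H i j F} =
      Nat.card (Σ S : {S : Finset (Fin (i + j)) // S.card = i},
        {A // IsTreeOn ρ K S.1 A} × {B // IsTreeOn ρ H S.1ᶜ B}) := by
  refine (Nat.card_eq_of_bijective
    (fun x => ⟨x.2.1.1 ∪ x.2.2.1, isTwoTreeForest_union hHK hKtop x.1.2 x.2.1.2 x.2.2.2⟩)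
    ⟨?_, fun ⟨F, hF⟩ => ?_⟩).symm
  · rintro ⟨⟨S, hS⟩, ⟨A, hA⟩, ⟨B, hB⟩⟩ ⟨⟨S', hS'⟩, ⟨A', hA'⟩, ⟨B', hB'⟩⟩ h
    have hAB : A ∪ B = A' ∪ B' := congrArg Subtype.val h
    have hA'A : A = A' := by
      rw [← sep_label_union_eq_left hHK.ne hA.label_eq hB.label_eq, hAB,
        sep_label_union_eq_left hHK.ne hA'.label_eq hB'.label_eq]
    have hB'B : B = B' := by
      rw [← sep_label_union_eq_left hHK.ne' hB.label_eq hA.label_eq, Set.union_comm, hAB,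
        Set.union_comm, sep_label_union_eq_left hHK.ne' hB'.label_eq hA'.label_eq]
    subst hA'A hB'B
    obtain rfl : S = S' := hA.leafSet_eq hA'
    rfl
  · obtain ⟨S, hS, A, B, hA, hB, rfl⟩ := hF.exists_eq_union
    exact ⟨⟨⟨S, hS⟩, ⟨A, hA⟩, ⟨B, hB⟩⟩, rfl⟩

end TwoTrees

/-! ### Contracting a subtree to a leaf, and grafting it back -/

namespace FVertex

section Grafting

variable {N : ℕ} {T : Finset (Fin N)} {t₀ : Fin N}

/-- Delete the leaves of `T` other than `t₀`: on a vertex lying above all of `T` this contracts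
`T` to the single leaf `t₀`. -/
def collapse (T : Finset (Fin N)) (t₀ : Fin N) (v : FVertex N G) : FVertex N G where
  leaves := v.leaves \ T.erase t₀
  label := v.label
  coset l := if l ∈ T.erase t₀ then ∅ else v.coset l

/-- Replace the leaf `t₀` of a vertex by the leaf set `T` of a grafted tree, whose root carries the
cosets `c`. -/
def expand (T : Finset (Fin N)) (t₀ : Fin N) (c : Fin N → Set G) (v : FVertex N G) :
    FVertex N G where
  leaves := if t₀ ∈ v.leaves then v.leaves ∪ T else v.leaves
  label := v.label
  coset l := if l ∈ T then c l * v.coset t₀ else v.coset l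

@[simp]
theorem collapse_leaves (v : FVertex N G) : (collapse T t₀ v).leaves = v.leaves \ T.erase t₀ :=
  rfl

theorem collapse_coset_of_notMem (v : FVertex N G) {l : Fin N} (hl : l ∉ T.erase t₀) :
    (collapse T t₀ v).coset l = v.coset l :=
  if_neg hl

@[simp]
theorem expand_label (c : Fin N → Set G) (v : FVertex N G) :
    (expand T t₀ c v).label = v.label := rfl

theorem mem_expand_leaves {c : Fin N → Set G} {v : FVertex N G} {l : Fin N} :
    l ∈ (expand T t₀ c v).leaves ↔ l ∈ v.leaves ∨ (t₀ ∈ v.leaves ∧ l ∈ T) := by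
  by_cases h : t₀ ∈ v.leaves <;> simp [expand, h]

theorem mem_of_mem_expand_leaves {c : Fin N → Set G} {v : FVertex N G} {l : Fin N}
    (hl : l ∈ (expand T t₀ c v).leaves) (hlT : l ∉ T) : l ∈ v.leaves :=
  (mem_expand_leaves.1 hl).resolve_right fun h => hlT h.2

theorem expand_coset_of_mem (c : Fin N → Set G) (v : FVertex N G) {l : Fin N} (hl : l ∈ T) :
    (expand T t₀ c v).coset l = c l * v.coset t₀ :=
  if_pos hl

theorem expand_coset_of_notMem (c : Fin N → Set G) (v : FVertex N G) {l : Fin N} (hl : l ∉ T) :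
    (expand T t₀ c v).coset l = v.coset l :=
  if_neg hl

theorem eq_of_mem_of_disjoint_erase {v : FVertex N G} (hv : Disjoint v.leaves (T.erase t₀))
    {l : Fin N} (hl : l ∈ v.leaves) (hlT : l ∈ T) : l = t₀ := by
  by_contra hne
  exact Finset.disjoint_left.1 hv hl (Finset.mem_erase.2 ⟨hne, hlT⟩)

theorem mem_leaves_of_mem_expand_leaves {c : Fin N → Set G} {v : FVertex N G}
    (hv : Disjoint v.leaves (T.erase t₀)) {l : Fin N} (hl : l ∈ (expand T t₀ c v).leaves)
    (hlT : l ∈ T) : t₀ ∈ v.leaves :=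
  (mem_expand_leaves.1 hl).elim (fun hl => eq_of_mem_of_disjoint_erase hv hl hlT ▸ hl) And.left

theorem subset_leaves_of_mem {v : FVertex N G} (hv : T ⊆ v.leaves ∨ Disjoint v.leaves T)
    {l : Fin N} (hl : l ∈ v.leaves) (hlT : l ∈ T) : T ⊆ v.leaves :=
  hv.resolve_right fun h => Finset.disjoint_left.1 h hl hlT

variable {u v : FVertex N G}

theorem collapse_expand_leaves (c : Fin N → Set G) (hu : Disjoint u.leaves (T.erase t₀)) :
    (collapse T t₀ (expand T t₀ c u)).leaves = u.leaves := by
  ext l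
  simp only [collapse_leaves, Finset.mem_sdiff, mem_expand_leaves, Finset.mem_erase]
  refine ⟨fun ⟨h, hl⟩ => h.elim id fun ⟨ht, hlT⟩ => ?_, fun hl => ⟨Or.inl hl, fun ⟨hne, hlT⟩ =>
    hne (eq_of_mem_of_disjoint_erase hu hl hlT)⟩⟩
  by_contra hne
  exact hl ⟨fun h => hne (h ▸ ht), hlT⟩

theorem expand_subset_or_disjoint (c : Fin N → Set G) (hu : Disjoint u.leaves (T.erase t₀)) :
    T ⊆ (expand T t₀ c u).leaves ∨ Disjoint (expand T t₀ c u).leaves T := by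
  by_cases ht : t₀ ∈ u.leaves
  · exact Or.inl fun l hl => mem_expand_leaves.2 (Or.inr ⟨ht, hl⟩)
  · refine Or.inr (Finset.disjoint_left.2 fun l hl hlT => ?_)
    rcases mem_expand_leaves.1 hl with hl | ⟨ht', -⟩
    exacts [ht (eq_of_mem_of_disjoint_erase hu hl hlT ▸ hl), ht ht']

theorem collapse_leaves_subset_iff (ht₀ : t₀ ∈ T) (hu : T ⊆ u.leaves ∨ Disjoint u.leaves T)
    (hv : T ⊆ v.leaves ∨ Disjoint v.leaves T) :
    (collapse T t₀ u).leaves ⊆ (collapse T t₀ v).leaves ↔ u.leaves ⊆ v.leaves := by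
  refine ⟨fun h l hl => ?_, fun h => Finset.sdiff_subset_sdiff h le_rfl⟩
  by_cases hlT : l ∈ T
  · have ht₀u : t₀ ∈ (collapse T t₀ u).leaves := by
      simp [subset_leaves_of_mem hu hl hlT ht₀]
    exact subset_leaves_of_mem hv (Finset.mem_sdiff.1 (h ht₀u)).1 ht₀ hlT
  · exact (Finset.mem_sdiff.1 (h (Finset.mem_sdiff.2
      ⟨hl, fun h' => hlT (Finset.mem_of_mem_erase h')⟩))).1

theorem collapse_leaves_inter_nonempty_iff (ht₀ : t₀ ∈ T)
    (hu : T ⊆ u.leaves ∨ Disjoint u.leaves T) (hv : T ⊆ v.leaves ∨ Disjoint v.leaves T) :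
    ((collapse T t₀ u).leaves ∩ (collapse T t₀ v).leaves).Nonempty ↔
      (u.leaves ∩ v.leaves).Nonempty := by
  refine ⟨fun h => h.mono (Finset.inter_subset_inter Finset.sdiff_subset Finset.sdiff_subset),
    fun ⟨l, hl⟩ => ?_⟩
  rw [Finset.mem_inter] at hl
  by_cases hlT : l ∈ T
  · exact ⟨t₀, by
      simp [subset_leaves_of_mem hu hl.1 hlT ht₀, subset_leaves_of_mem hv hl.2 hlT ht₀]⟩
  · exact ⟨l, by simp [hl.1, hl.2, hlT]⟩

theorem expand_leaves_subset_iff (ht₀ : t₀ ∈ T) (c : Fin N → Set G)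
    (hu : Disjoint u.leaves (T.erase t₀)) (hv : Disjoint v.leaves (T.erase t₀)) :
    (expand T t₀ c u).leaves ⊆ (expand T t₀ c v).leaves ↔ u.leaves ⊆ v.leaves := by
  rw [← collapse_leaves_subset_iff ht₀ (expand_subset_or_disjoint c hu)
    (expand_subset_or_disjoint c hv), collapse_expand_leaves c hu, collapse_expand_leaves c hv]

theorem expand_below_expand_iff (ht₀ : t₀ ∈ T) (c : Fin N → Set G)
    (hu : Disjoint u.leaves (T.erase t₀)) (hv : Disjoint v.leaves (T.erase t₀)) :
    (expand T t₀ c u).below (expand T t₀ c v) ↔ u.below v :=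
  below_iff_of_leaves_subset_iff (expand_leaves_subset_iff ht₀ c hu hv)
    (expand_leaves_subset_iff ht₀ c hv hu) rfl rfl

theorem expand_leaves_inter_nonempty_iff (ht₀ : t₀ ∈ T) (c : Fin N → Set G)
    (hu : Disjoint u.leaves (T.erase t₀)) (hv : Disjoint v.leaves (T.erase t₀)) :
    ((expand T t₀ c u).leaves ∩ (expand T t₀ c v).leaves).Nonempty ↔
      (u.leaves ∩ v.leaves).Nonempty := by
  rw [← collapse_leaves_inter_nonempty_iff ht₀ (expand_subset_or_disjoint c hu)
    (expand_subset_or_disjoint c hv), collapse_expand_leaves c hu, collapse_expand_leaves c hv]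

theorem min'_notMem_erase (ht₀ : IsLeast (T : Set (Fin N)) t₀)
    (hv : T ⊆ v.leaves ∨ Disjoint v.leaves T) (h : v.leaves.Nonempty) :
    v.leaves.min' h ∉ T.erase t₀ := fun hm => by
  obtain ⟨hne, hmT⟩ := Finset.mem_erase.1 hm
  refine hne (le_antisymm (Finset.min'_le _ _ ?_) (ht₀.2 hmT))
  exact subset_leaves_of_mem hv (Finset.min'_mem _ h) hmT ht₀.1

theorem min'_collapse_leaves (ht₀ : IsLeast (T : Set (Fin N)) t₀)
    (hv : T ⊆ v.leaves ∨ Disjoint v.leaves T) (h : (collapse T t₀ v).leaves.Nonempty)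
    (h' : v.leaves.Nonempty) : (collapse T t₀ v).leaves.min' h = v.leaves.min' h' :=
  le_antisymm
    (Finset.min'_le _ _ (Finset.mem_sdiff.2 ⟨Finset.min'_mem _ h', min'_notMem_erase ht₀ hv h'⟩))
    (Finset.le_min' _ _ _ fun _ hy => Finset.min'_le _ _ (Finset.mem_sdiff.1 hy).1)

theorem min'_expand_leaves (ht₀ : IsLeast (T : Set (Fin N)) t₀) (c : Fin N → Set G)
    (hv : Disjoint v.leaves (T.erase t₀))
    (h : (expand T t₀ c v).leaves.Nonempty) (h' : v.leaves.Nonempty) :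
    (expand T t₀ c v).leaves.min' h = v.leaves.min' h' := by
  have hcol := collapse_expand_leaves c hv
  rw [← min'_collapse_leaves ht₀ (expand_subset_or_disjoint c hv) (hcol ▸ h') h]
  simp only [hcol]

theorem collapse_expand (c : Fin N → Set G) (hv : Disjoint v.leaves (T.erase t₀))
    (hcoset : ∀ l ∉ v.leaves, v.coset l = ∅)
    (hc : c t₀ * v.coset t₀ = v.coset t₀) : collapse T t₀ (expand T t₀ c v) = v := by
  ext : 1
  · exact collapse_expand_leaves c hv
  · rfl
  · funext l
    by_cases hl : l ∈ T.erase t₀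
    · exact (if_pos hl).trans (hcoset l fun h => Finset.disjoint_left.1 hv h hl).symm
    · rw [collapse_coset_of_notMem _ hl]
      by_cases hlT : l ∈ T
      · obtain rfl : l = t₀ := by simpa [hlT] using hl
        rw [expand_coset_of_mem c v hlT, hc]
      · exact expand_coset_of_notMem c v hlT

theorem expand_collapse (ht₀ : t₀ ∈ T) (c : Fin N → Set G)
    (hv : T ⊆ v.leaves ∨ Disjoint v.leaves T) (hcoset : ∀ l ∉ v.leaves, v.coset l = ∅)
    (hchain : T ⊆ v.leaves → ∀ l ∈ T, v.coset l = c l * v.coset t₀) :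
    expand T t₀ c (collapse T t₀ v) = v := by
  have ht₀v : t₀ ∈ (collapse T t₀ v).leaves ↔ t₀ ∈ v.leaves := by simp
  ext : 1
  · ext l
    rcases hv with hTv | hvT
    · rw [mem_expand_leaves, ht₀v, collapse_leaves]
      by_cases hlT : l ∈ T
      · simp [hlT, hTv ht₀, hTv hlT]
      · simp [hlT]
    · have ht₀' : t₀ ∉ v.leaves := fun h => Finset.disjoint_left.1 hvT h ht₀
      rw [mem_expand_leaves, ht₀v, collapse_leaves,
        (hvT.mono_right (Finset.erase_subset _ _)).sdiff_eq_left]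
      simp [ht₀']
  · rfl
  · funext l
    by_cases hlT : l ∈ T
    · rw [expand_coset_of_mem c _ hlT, collapse_coset_of_notMem _ (Finset.notMem_erase t₀ T)]
      rcases hv with hTv | hvT
      · exact (hchain hTv l hlT).symm
      · rw [hcoset t₀ fun h => Finset.disjoint_left.1 hvT h ht₀, Set.mul_empty,
          hcoset l fun h => Finset.disjoint_left.1 hvT h hlT]
    · rw [expand_coset_of_notMem c _ hlT,
        collapse_coset_of_notMem _ fun h => hlT (Finset.mem_of_mem_erase h)]

end Grafting

end FVertex

namespace ForestAxioms

variable {N : ℕ} {ρ : Representation ℂ G V} {T : Finset (Fin N)} {t₀ : Fin N}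

theorem coe_mul_coset {F : Set (FVertex N G)} (hF : ForestAxioms ρ F) {H : Subgroup G}
    {v : FVertex N G} (hv : v ∈ F) (hH : H ≤ v.label) (l : Fin N) :
    (H : Set G) * v.coset l = v.coset l := by
  by_cases hl : l ∈ v.leaves
  · obtain ⟨a, ha⟩ := hF.coset_eq_smul v hv l hl
    rw [ha, coe_mul_smul_coe hH]
  · rw [hF.coset_eq_empty v hv l hl, Set.mul_empty]

theorem image_collapse {C : Set (FVertex N G)} (hC : ForestAxioms ρ C)
    (ht₀ : IsLeast (T : Set (Fin N)) t₀) (hclade : ∀ v ∈ C, T ⊆ v.leaves ∨ Disjoint v.leaves T)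
    (hbot : ∀ v ∈ C, v.label ≠ ⊥) : ForestAxioms ρ (collapse T t₀ '' C) := by
  have hsub := fun u (hu : u ∈ C) v (hv : v ∈ C) =>
    collapse_leaves_subset_iff ht₀.1 (hclade u hu) (hclade v hv)
  have hbelow := fun u (hu : u ∈ C) v (hv : v ∈ C) =>
    below_iff_of_leaves_subset_iff (hsub u hu v hv) (hsub v hv u hu) rfl rfl
  refine {
    toLabelAxioms := hC.toLabelAxioms.image _ (fun _ => rfl) hsub
      (fun u hu v hv => collapse_leaves_inter_nonempty_iff ht₀.1 (hclade u hu) (hclade v hv))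
      fun v hv _ _ => Or.inl (hbot v hv)
    coset_eq_smul := ?_, coset_eq_empty := ?_, edge := ?_, coset_min' := ?_ }
  · rintro _ ⟨v, hv, rfl⟩ l hl
    obtain ⟨hlv, hlT⟩ := Finset.mem_sdiff.1 hl
    rw [collapse_coset_of_notMem _ hlT]
    exact hC.coset_eq_smul v hv l hlv
  · rintro _ ⟨v, hv, rfl⟩ l hl
    by_cases hlT : l ∈ T.erase t₀
    · exact if_pos hlT
    · rw [collapse_coset_of_notMem _ hlT]
      exact hC.coset_eq_empty v hv l fun h => hl (Finset.mem_sdiff.2 ⟨h, hlT⟩)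
  · rintro _ ⟨v, hv, rfl⟩ _ ⟨w, hw, rfl⟩ hvw
    obtain ⟨a, hle, hcoset, hmin⟩ :=
      hC.edge v hv w hw ((isDirectChild_image_iff hbelow hv hw).1 hvw)
    refine ⟨a, hle, fun l hl => ?_, fun h hmin' => ?_⟩
    · obtain ⟨hlw, hlT⟩ := Finset.mem_sdiff.1 hl
      rw [collapse_coset_of_notMem _ hlT, collapse_coset_of_notMem _ hlT]
      exact hcoset l hlw
    · have hv' := hC.leaves_nonempty v hv
      rw [min'_collapse_leaves ht₀ (hclade v hv) h hv'] at hmin'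
      exact hmin hv' (Finset.mem_sdiff.1 hmin').1
  · rintro _ ⟨v, hv, rfl⟩ h
    have hv' := hC.leaves_nonempty v hv
    rw [min'_collapse_leaves ht₀ (hclade v hv) h hv',
      collapse_coset_of_notMem _ (min'_notMem_erase ht₀ (hclade v hv) hv')]
    exact hC.coset_min' v hv hv'

theorem image_expand {A : Set (FVertex N G)} (hA : ForestAxioms ρ A)
    (ht₀ : IsLeast (T : Set (Fin N)) t₀) (hdisj : ∀ v ∈ A, Disjoint v.leaves (T.erase t₀))
    {H K : Subgroup G} (hlab : ∀ v ∈ A, v.label = K) (hHK : H ≤ K) {c : Fin N → Set G}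
    (hc : ∀ l ∈ T, ∃ x : G, c l = x • (H : Set G)) (hct₀ : c t₀ = H) :
    ForestAxioms ρ (expand T t₀ c '' A) := by
  have hsub := fun u (hu : u ∈ A) v (hv : v ∈ A) =>
    expand_leaves_subset_iff ht₀.1 c (hdisj u hu) (hdisj v hv)
  refine {
    toLabelAxioms := hA.toLabelAxioms.image _ (fun _ => rfl) hsub
      (fun u hu v hv => expand_leaves_inter_nonempty_iff ht₀.1 c (hdisj u hu) (hdisj v hv))
      fun v hv l hl => Or.inr ⟨l, ?_⟩
    coset_eq_smul := ?_, coset_eq_empty := ?_, edge := ?_, coset_min' := ?_ }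
  · have hvl : v.leaves ⊆ (expand T t₀ c v).leaves := fun l hl => mem_expand_leaves.2 (Or.inl hl)
    rw [hl, Finset.subset_singleton_iff] at hvl
    exact hvl.resolve_left (hA.leaves_nonempty v hv).ne_empty
  · rintro _ ⟨v, hv, rfl⟩ l hl
    by_cases hlT : l ∈ T
    · obtain ⟨x, hx⟩ := hc l hlT
      obtain ⟨y, hy⟩ :=
        hA.coset_eq_smul v hv t₀ (mem_leaves_of_mem_expand_leaves (hdisj v hv) hl hlT)
      rw [expand_coset_of_mem c v hlT, hx, hy, expand_label, smul_coe_mul_smul_coe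
        (hHK.trans_eq (hlab v hv).symm)]
      exact ⟨x * y, rfl⟩
    · rw [expand_coset_of_notMem c v hlT]
      exact hA.coset_eq_smul v hv l (mem_of_mem_expand_leaves hl hlT)
  · rintro _ ⟨v, hv, rfl⟩ l hl
    rw [mem_expand_leaves, not_or, not_and] at hl
    by_cases hlT : l ∈ T
    · rw [expand_coset_of_mem c v hlT, hA.coset_eq_empty v hv t₀ fun ht => hl.2 ht hlT,
        Set.mul_empty]
    · rw [expand_coset_of_notMem c v hlT]
      exact hA.coset_eq_empty v hv l hl.1
  · rintro _ ⟨v, hv, rfl⟩ _ ⟨w, hw, rfl⟩ hvw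
    obtain ⟨a, hle, hcoset, hmin⟩ := hA.edge v hv w hw ((isDirectChild_image_iff
      (fun u hu v hv => expand_below_expand_iff ht₀.1 c (hdisj u hu) (hdisj v hv)) hv hw).1 hvw)
    refine ⟨a, hle, fun l hl => ?_, fun h hmin' => ?_⟩
    · by_cases hlT : l ∈ T
      · rw [expand_coset_of_mem c _ hlT, expand_coset_of_mem c _ hlT, expand_label,
          hcoset t₀ (mem_leaves_of_mem_expand_leaves (hdisj w hw) hl hlT), mul_assoc]
      · rw [expand_coset_of_notMem c _ hlT, expand_coset_of_notMem c _ hlT]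
        exact hcoset l (mem_of_mem_expand_leaves hl hlT)
    · have hv' := hA.leaves_nonempty v hv
      rw [min'_expand_leaves ht₀ c (hdisj v hv) h hv'] at hmin'
      refine hmin hv' ((mem_expand_leaves.1 hmin').elim id fun ⟨ht₀w, hmT⟩ => ?_)
      rwa [eq_of_mem_of_disjoint_erase (hdisj v hv) (Finset.min'_mem _ hv') hmT]
  · rintro _ ⟨v, hv, rfl⟩ h
    have hv' := hA.leaves_nonempty v hv
    rw [min'_expand_leaves ht₀ c (hdisj v hv) h hv', expand_label]
    by_cases hmT : v.leaves.min' hv' ∈ T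
    · have hmt₀ := eq_of_mem_of_disjoint_erase (hdisj v hv) (Finset.min'_mem _ hv') hmT
      rw [expand_coset_of_mem c v hmT, hmt₀, hct₀,
        hA.coe_mul_coset hv (hHK.trans_eq (hlab v hv).symm), ← hmt₀]
      exact hA.coset_min' v hv hv'
    · rw [expand_coset_of_notMem c v hmT]
      exact hA.coset_min' v hv hv'

end ForestAxioms

section GraftUnion

variable {N : ℕ} {ρ : Representation ℂ G V} {T : Finset (Fin N)} {t₀ : Fin N}
  {C B : Set (FVertex N G)} {H K : Subgroup G}

theorem not_below_of_isTreeOn (hHK : H < K) (hB : IsTreeOn ρ H T B) {v b : FVertex N G}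
    (hvK : v.label = K) (hv : v.leaves.Nonempty) (hclade : T ⊆ v.leaves ∨ Disjoint v.leaves T)
    (hb : b ∈ B) : ¬ v.below b := fun hvb => by
  have hvT := (leaves_subset_of_below hvb).trans (hB.leaves_subset b hb)
  obtain ⟨l, hl⟩ := hv
  have heq : v.leaves = b.leaves := (leaves_subset_of_below hvb).antisymm
    ((hB.leaves_subset b hb).trans (subset_leaves_of_mem hclade hl (hvT hl)))
  rcases below_iff.1 hvb with hss | ⟨-, hlt⟩
  · exact hss.ne heq
  · rw [hvK, hB.label_eq b hb] at hlt
    exact hHK.not_gt hlt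

theorem LabelAxioms.union_of_isTreeOn (hC : LabelAxioms ρ C) (hClab : ∀ v ∈ C, v.label = K)
    (hKtop : K ≠ ⊤) (hHK : H < K) (hclade : ∀ v ∈ C, T ⊆ v.leaves ∨ Disjoint v.leaves T)
    (hB : IsTreeOn ρ H T B) : LabelAxioms ρ (C ∪ B) := by
  have hlt : ∀ v ∈ C, ∀ b ∈ B, b.label < v.label := fun v hv b hb => by
    rw [hClab v hv, hB.label_eq b hb]
    exact hHK
  have hsubset : ∀ v ∈ C, ∀ b ∈ B, (v.leaves ∩ b.leaves).Nonempty → b.leaves ⊆ v.leaves :=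
    fun v hv b hb ⟨l, hl⟩ => (hB.leaves_subset b hb).trans (subset_leaves_of_mem (hclade v hv)
      (Finset.mem_inter.1 hl).1 (hB.leaves_subset b hb (Finset.mem_inter.1 hl).2))
  have hnot : ∀ v ∈ C, ∀ b ∈ B, ¬ v.below b := fun v hv b hb =>
    not_below_of_isTreeOn hHK hB (hClab v hv) (hC.leaves_nonempty v hv) (hclade v hv) hb
  exact {
    finite := hC.finite.union hB.forest.finite
    nonempty := hC.nonempty.mono Set.subset_union_left
    leaves_nonempty := by
      rintro v (hv | hv)
      exacts [hC.leaves_nonempty v hv, hB.forest.leaves_nonempty v hv]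
    isClosed := by
      rintro v (hv | hv)
      exacts [hC.isClosed v hv, hB.forest.isClosed v hv]
    laminar := by
      rintro v (hv | hv) b (hb | hb) h
      · exact hC.laminar v hv b hb h
      · exact Or.inr (hsubset v hv b hb h)
      · rw [Finset.inter_comm] at h
        exact Or.inl (hsubset b hb v hv h)
      · exact hB.forest.laminar v hv b hb h
    label_le := by
      rintro v (hv | hv) w (hw | hw) h
      · exact hC.label_le v hv w hw h
      · exact (hlt v hv w hw).le
      · exact absurd (below_iff.2 (Or.inl h)) (hnot w hw v hv)
      · exact hB.forest.label_le v hv w hw h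
    label_lt_or_lt := by
      rintro v (hv | hv) w (hw | hw) hne h
      · exact hC.label_lt_or_lt v hv w hw hne h
      · exact Or.inr (hlt v hv w hw)
      · exact Or.inl (hlt w hw v hv)
      · exact hB.forest.label_lt_or_lt v hv w hw hne h
    label_ne_bot := by
      rintro v (hv | hv) l hl hnone
      · exact hC.label_ne_bot v hv l hl fun ⟨w, hw, h⟩ => hnone ⟨w, Or.inl hw, h⟩
      · exact hB.forest.label_ne_bot v hv l hl fun ⟨w, hw, h⟩ => hnone ⟨w, Or.inr hw, h⟩
    top_chain := by
      rintro v (hv | hv) - - hvt -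
      · exact absurd ((hClab v hv).symm.trans hvt) hKtop
      · exact absurd ((hB.label_eq v hv).symm.trans hvt) (hHK.trans_le le_top).ne }

theorem ForestAxioms.union_of_isTreeOn (hC : ForestAxioms ρ C) (hClab : ∀ v ∈ C, v.label = K)
    (hKtop : K ≠ ⊤) (hHK : H < K) (ht₀ : IsLeast (T : Set (Fin N)) t₀)
    (hclade : ∀ v ∈ C, T ⊆ v.leaves ∨ Disjoint v.leaves T) (hB : IsTreeOn ρ H T B)
    {w : FVertex N G} (hw : w ∈ B) (hwT : w.leaves = T)
    (hchain : ∀ v ∈ C, T ⊆ v.leaves → ∀ l ∈ T, v.coset l = w.coset l * v.coset t₀) :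
    ForestAxioms ρ (C ∪ B) where
  toLabelAxioms := hC.toLabelAxioms.union_of_isTreeOn hClab hKtop hHK hclade hB
  coset_eq_smul := by
    rintro v (hv | hv)
    exacts [hC.coset_eq_smul v hv, hB.forest.coset_eq_smul v hv]
  coset_eq_empty := by
    rintro v (hv | hv)
    exacts [hC.coset_eq_empty v hv, hB.forest.coset_eq_empty v hv]
  edge := by
    rintro v (hv | hv) b (hb | hb) hvb
    · exact hC.edge v hv b hb (hvb.mono Set.subset_union_left)
    · obtain ⟨l, hl⟩ := hB.forest.leaves_nonempty b hb
      have hTv : T ⊆ v.leaves := subset_leaves_of_mem (hclade v hv)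
        (leaves_subset_of_below hvb.1 hl) (hB.leaves_subset b hb hl)
      have hbv : b.label < v.label := by
        rw [hB.label_eq b hb, hClab v hv]
        exact hHK
      obtain rfl : b = w := (hB.eq_or_below hw hwT hb).resolve_right fun hbw =>
        hvb.2 ⟨w, Or.inr hw, hbw, below_of_subset_of_lt (hwT ▸ hTv)
          (by rwa [hB.label_eq w hw, ← hB.label_eq b hb])⟩
      obtain ⟨a, ha⟩ := hC.coset_eq_smul v hv t₀ (hTv ht₀.1)
      refine ⟨a, hbv.le, fun l hl => by rw [hchain v hv hTv l (hwT ▸ hl), ha],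
        fun h hmin => mem_of_smul_coe_eq ?_⟩
      have hmin_eq : v.leaves.min' h = t₀ :=
        le_antisymm (Finset.min'_le _ _ (hTv ht₀.1)) (ht₀.2 (hwT ▸ hmin))
      rw [← ha, ← hmin_eq]
      exact hC.coset_min' v hv h
    · exact absurd hvb.1 (not_below_of_isTreeOn hHK hB (hClab b hb)
        (hC.leaves_nonempty b hb) (hclade b hb) hv)
    · exact hB.forest.edge v hv b hb (hvb.mono Set.subset_union_right)
  coset_min' := by
    rintro v (hv | hv)
    exacts [hC.coset_min' v hv, hB.forest.coset_min' v hv]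

end GraftUnion

/-! ### Part (b): grafted forests -/

section Grafted

variable {n : ℕ} {ρ : Representation ℂ G V} {H K : Subgroup G} {j : ℕ}

/-- The forests counted in part (b). -/
def IsGraftedForest (ρ : Representation ℂ G V) (K H : Subgroup G) (j : ℕ)
    (F : Set (FVertex n G)) : Prop :=
  IsFGForest ρ F ∧
    (∃ v₁ ∈ F, rootsOf F = {v₁}) ∧ fallenLeaves F = ∅ ∧
    (∀ u ∈ F, u.label = K ∨ u.label = H) ∧ (∃ u ∈ F, u.label = K) ∧
    ∃ w ∈ F, w.label = H ∧ w.leaves.card = j ∧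
      ∀ u ∈ F, u.label = H → (u = w ∨ u.below w)

theorem IsTreeOn.coset_root_eq {T : Finset (Fin n)} {t₀ : Fin n} {B : Set (FVertex n G)}
    (hB : IsTreeOn ρ H T B) (ht₀ : IsLeast (T : Set (Fin n)) t₀) :
    hB.root.coset t₀ = H := by
  have hne : hB.root.leaves.Nonempty := hB.forest.leaves_nonempty _ hB.root_mem
  have hmin : hB.root.leaves.min' hne = t₀ :=
    (Finset.isLeast_min' _ hne).unique (by rwa [hB.root_leaves])
  rw [← hmin, hB.forest.coset_min' _ hB.root_mem, hB.label_eq _ hB.root_mem]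

theorem IsTreeOn.label_eq_of_mem_image_expand {S T : Finset (Fin n)} {t₀ : Fin n}
    {A : Set (FVertex n G)} (hA : IsTreeOn ρ K S A) (c : Fin n → Set G) :
    ∀ u ∈ expand T t₀ c '' A, u.label = K := by
  rintro _ ⟨v, hv, rfl⟩
  exact hA.label_eq v hv

theorem isGraftedForest_image_expand_union (hHK : H < K) (hKtop : K ≠ ⊤) {T : Finset (Fin n)}
    {t₀ : Fin n} (ht₀ : IsLeast (T : Set (Fin n)) t₀) (hT : T.card = j) {A B : Set (FVertex n G)}
    (hA : IsTreeOn ρ K (T.erase t₀)ᶜ A) (hB : IsTreeOn ρ H T B) :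
    IsGraftedForest ρ K H j (expand T t₀ hB.root.coset '' A ∪ B) := by
  set E := expand (G := G) T t₀ hB.root.coset
  have hdisj : ∀ v ∈ A, Disjoint v.leaves (T.erase t₀) := fun v hv =>
    disjoint_compl_left.mono_left (hA.leaves_subset v hv)
  have hElab := hA.label_eq_of_mem_image_expand (T := T) (t₀ := t₀) hB.root.coset
  have hfix : ∀ v ∈ A, (E v).coset t₀ = v.coset t₀ := fun v hv => by
    rw [expand_coset_of_mem _ _ ht₀.1, hB.coset_root_eq ht₀,
      hA.forest.coe_mul_coset hv (hHK.le.trans_eq (hA.label_eq v hv).symm)]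
  have hc : ∀ l ∈ T, ∃ x : G, hB.root.coset l = x • (H : Set G) := fun l hl => by
    simpa [hB.label_eq _ hB.root_mem] using
      hB.forest.coset_eq_smul _ hB.root_mem l (by rwa [hB.root_leaves])
  have hF := (hA.forest.image_expand ht₀ hdisj hA.label_eq hHK.le hc
    (hB.coset_root_eq ht₀)).union_of_isTreeOn hElab hKtop hHK ht₀
    (by rintro _ ⟨v, hv, rfl⟩; exact expand_subset_or_disjoint _ (hdisj v hv))
    hB hB.root_mem hB.root_leaves (by
      rintro _ ⟨v, hv, rfl⟩ - l hl
      rw [hfix v hv, expand_coset_of_mem _ _ hl])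
  obtain ⟨r, hr, hrS⟩ := hA.exists_root
  have hEr : (E r).leaves = Finset.univ := by
    ext l
    by_cases hl : l ∈ T <;> simp [E, mem_expand_leaves, hrS, hl]
  have hbelow : ∀ u ∈ E '' A ∪ B, u = E r ∨ u.below (E r) := by
    rintro u (⟨v, hv, rfl⟩ | hu)
    · exact (hA.eq_or_below hr hrS hv).imp (congrArg E)
        (expand_below_expand_iff ht₀.1 _ (hdisj v hv) (hdisj r hr)).2
    · refine Or.inr (below_of_subset_of_lt (hEr ▸ Finset.subset_univ _) ?_)
      rw [hB.label_eq u hu, expand_label, hA.label_eq r hr]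
      exact hHK
  refine ⟨isFGForest_iff_forestAxioms.2 hF, ⟨E r, Or.inl ⟨r, hr, rfl⟩,
    rootsOf_eq_singleton (Or.inl ⟨r, hr, rfl⟩) hbelow⟩,
    fallenLeaves_eq_empty_iff.2 fun l => ⟨E r, Or.inl ⟨r, hr, rfl⟩, hEr ▸ Finset.mem_univ l⟩,
    fun u hu => hu.imp (hElab u) (hB.label_eq u), ⟨E r, Or.inl ⟨r, hr, rfl⟩, hElab _ ⟨r, hr, rfl⟩⟩,
    hB.root, Or.inr hB.root_mem, hB.label_eq _ hB.root_mem, by rw [hB.root_leaves, hT], ?_⟩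
  rintro u (hu | hu) hlab
  · exact absurd (hElab u hu) (hlab ▸ hHK.ne)
  · exact hB.eq_or_below hB.root_mem hB.root_leaves hu

theorem IsGraftedForest.exists_eq_image_expand_union (hHK : H < K) {F : Set (FVertex n G)}
    (hF : IsGraftedForest ρ K H j F) :
    ∃ T : Finset (Fin n), T.card = j ∧ ∃ hT : T.Nonempty, ∃ A B, ∃ hB : IsTreeOn ρ H T B,
      IsTreeOn ρ K (T.erase (T.min' hT))ᶜ A ∧
      F = expand T (T.min' hT) hB.root.coset '' A ∪ B := by
  obtain ⟨hF, ⟨v₁, hv₁, hroots⟩, hfall, hlabKH, ⟨u, hu, hulab⟩, w, hw, hwlab, hwcard, hwmax⟩ := hF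
  rw [isFGForest_iff_forestAxioms] at hF
  set T := w.leaves
  have hT : T.Nonempty := hF.leaves_nonempty w hw
  have ht₀ := Finset.isLeast_min' T hT
  have hK : ∀ v ∈ F, v.label = K → ¬ (v = w ∨ v.below w) := by
    rintro v hv hvK (rfl | hvw)
    · exact hHK.ne (hwlab.symm.trans hvK)
    · exact hHK.not_ge (hvK ▸ hwlab ▸ hF.label_le_of_below hv hw hvw)
  have hclade : ∀ v ∈ F, v.label = K → T ⊆ v.leaves ∨ Disjoint v.leaves T := fun v hv hvK =>
    hF.subset_or_disjoint_of_not_below hv hw fun h => hK v hv hvK (Or.inr h)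
  have hchain : ∀ v ∈ F, v.label = K → T ⊆ v.leaves →
      ∀ l ∈ T, v.coset l = w.coset l * v.coset (T.min' hT) := fun v hv hvK hTv _ hl =>
    hF.coset_eq_mul_coset_min' hw hv (below_of_subset_of_lt hTv (hwlab ▸ hvK ▸ hHK)) hT hl
  have hbelow := fun v (hv : v ∈ F) => eq_or_below_of_rootsOf_eq_singleton hF.finite hroots hv
  have hv₁K : v₁.label = K := (hlabKH v₁ hv₁).resolve_right fun hv₁H => hK u hu hulab (by
    rcases hwmax v₁ hv₁ hv₁H with rfl | hv₁w
    · exact hbelow u hu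
    · exact Or.inr ((hbelow u hu).elim (· ▸ hv₁w) fun h => below_trans h hv₁w))
  have hv₁univ := leaves_eq_univ_of_rootsOf_eq_singleton hF.finite hroots hfall
  set Kp := {v ∈ F | v.label = K}
  have hKp : ForestAxioms ρ Kp := hF.of_subset (fun v hv => hv.1) ⟨u, hu, hulab⟩
    (fun v ⟨hv, hvK⟩ z hz _ _ hvz _ => ⟨hz, (hlabKH z hz).resolve_right fun hzH =>
      hK v hv hvK (Or.inr ((hwmax z hz hzH).elim (· ▸ hvz) (below_trans hvz)))⟩)
    fun _ hv _ _ _ _ => Or.inr (hv.2 ▸ (bot_le.trans_lt hHK).ne')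
  have hB := isTreeOn_subtree hF hw fun v hv =>
    (hlabKH v hv.1).resolve_left fun h => hK v hv.1 h hv.2
  refine ⟨T, hwcard, hT, collapse T (T.min' hT) '' Kp, subtree F w, hB,
    ⟨hKp.image_collapse ht₀ (fun v hv => hclade v hv.1 hv.2)
      (fun v hv => hv.2 ▸ (bot_le.trans_lt hHK).ne'), ?_, ?_,
      collapse T (T.min' hT) v₁, ⟨v₁, ⟨hv₁, hv₁K⟩, rfl⟩,
      by rw [collapse_leaves, hv₁univ, Finset.compl_eq_univ_sdiff]⟩, ?_⟩
  · rintro _ ⟨v, hv, rfl⟩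
    exact hv.2
  · rintro _ ⟨v, -, rfl⟩
    simp [Finset.sdiff_eq_inter_compl]
  · rw [← (hB.eq_root ⟨hw, Or.inl rfl⟩ rfl), Set.image_image,
      Set.image_congr fun v hv => expand_collapse ht₀.1 w.coset (hclade v hv.1 hv.2)
        (hF.coset_eq_empty v hv.1) (hchain v hv.1 hv.2), Set.image_id']
    ext v
    refine ⟨fun hv => ?_, fun hv => hv.elim (·.1) (·.1)⟩
    rcases hlabKH v hv with hvK | hvH
    exacts [Or.inl ⟨hv, hvK⟩, Or.inr ⟨hv, hwmax v hv hvH⟩]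

theorem image_collapse_image_expand (hHK : H ≤ K) {T : Finset (Fin n)} {t₀ : Fin n}
    {A : Set (FVertex n G)} (hA : IsTreeOn ρ K (T.erase t₀)ᶜ A) {c : Fin n → Set G}
    (hc : c t₀ = H) : collapse T t₀ '' (expand T t₀ c '' A) = A := by
  rw [Set.image_image]
  refine (Set.image_congr fun v hv => collapse_expand c
    (disjoint_compl_left.mono_left (hA.leaves_subset v hv)) (hA.forest.coset_eq_empty v hv)
    ?_).trans (Set.image_id' A)
  rw [hc, hA.forest.coe_mul_coset hv (hHK.trans_eq (hA.label_eq v hv).symm)]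

theorem card_isGraftedForest_eq_card_sigma (hHK : H < K) (hKtop : K ≠ ⊤) (hj : 0 < j) :
    Nat.card {F : Set (FVertex n G) // IsGraftedForest ρ K H j F} =
      Nat.card (Σ T : {T : Finset (Fin n) // T.card = j},
        {A // IsTreeOn ρ K (T.1.erase (T.1.min' (Finset.card_pos.1 (hj.trans_eq T.2.symm))))ᶜ A} ×
        {B // IsTreeOn ρ H T.1 B}) := by
  refine (Nat.card_eq_of_bijective (fun x => ⟨_, isGraftedForest_image_expand_union hHK hKtop
    (Finset.isLeast_min' _ _) x.1.2 x.2.1.2 x.2.2.2⟩) ⟨?_, fun ⟨F, hF⟩ => ?_⟩).symm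
  · rintro ⟨⟨T, hT⟩, ⟨A, hA⟩, ⟨B, hB⟩⟩ ⟨⟨T', hT'⟩, ⟨A', hA'⟩, ⟨B', hB'⟩⟩ h
    have hF : expand T _ hB.root.coset '' A ∪ B = expand T' _ hB'.root.coset '' A' ∪ B' :=
      congrArg Subtype.val h
    obtain rfl : B = B' := by
      rw [← sep_label_union_eq_left hHK.ne' hB.label_eq (hA.label_eq_of_mem_image_expand _),
        Set.union_comm, hF, Set.union_comm,
        sep_label_union_eq_left hHK.ne' hB'.label_eq (hA'.label_eq_of_mem_image_expand _)]
    obtain rfl : T = T' := hB.leafSet_eq hB'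
    obtain rfl : A = A' := by
      rw [← image_collapse_image_expand hHK.le hA (hB.coset_root_eq (Finset.isLeast_min' _ _)),
        ← sep_label_union_eq_left hHK.ne (hA.label_eq_of_mem_image_expand _) hB.label_eq, hF,
        sep_label_union_eq_left hHK.ne (hA'.label_eq_of_mem_image_expand _) hB.label_eq,
        image_collapse_image_expand hHK.le hA' (hB.coset_root_eq (Finset.isLeast_min' _ _))]
    rfl
  · obtain ⟨T, hT, hTne, A, B, hB, hA, rfl⟩ := hF.exists_eq_image_expand_union hHK
    exact ⟨⟨⟨T, hT⟩, ⟨A, hA⟩, ⟨B, hB⟩⟩, rfl⟩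

end Grafted

theorem count_KH_forests_general
    (ρ : Representation ℂ G V)
    (H K : Subgroup G)
    (hHK : H < K) (hKtop : K ≠ ⊤) (i j : ℕ) (hj : 0 < j) :
    -- (a) two components: a K-tree with i leaves and an H-tree with j leaves
    Nat.card {F : Set (FVertex (i + j) G) // IsFGForest ρ F ∧
        ∃ v₁ ∈ F, ∃ v₂ ∈ F, v₁ ≠ v₂ ∧ rootsOf F = {v₁, v₂} ∧
          fallenLeaves F = ∅ ∧
          (∀ u ∈ F, (u = v₁ ∨ u.below v₁) → u.label = K) ∧
          (∀ u ∈ F, (u = v₂ ∨ u.below v₂) → u.label = H) ∧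
          v₁.leaves.card = i ∧ v₂.leaves.card = j} =
      (i + j).choose i * lamHT ρ K i * lamHT ρ H j ∧
    -- (b) a single tree: the root of an H-tree with j leaves glued to a leaf of a
    -- K-tree with i leaves
    Nat.card {F : Set (FVertex (i + j - 1) G) // IsFGForest ρ F ∧
        (∃ v₁ ∈ F, rootsOf F = {v₁}) ∧ fallenLeaves F = ∅ ∧
        (∀ u ∈ F, u.label = K ∨ u.label = H) ∧ (∃ u ∈ F, u.label = K) ∧
        ∃ w ∈ F, w.label = H ∧ w.leaves.card = j ∧
          ∀ u ∈ F, u.label = H → (u = w ∨ u.below w)} =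
      (i + j - 1).choose j * lamHT ρ K i * lamHT ρ H j := by
  refine ⟨(card_isTwoTreeForest_eq_card_sigma hHK hKtop).trans
    (card_sigma_isTreeOn_prod K _ _ (fun S => S.2) fun S => card_compl_of_card_eq S.2),
    (card_isGraftedForest_eq_card_sigma hHK hKtop hj).trans
    (card_sigma_isTreeOn_prod K _ _ (fun T => ?_) fun T => T.2)⟩
  rw [Finset.card_compl, Fintype.card_fin, Finset.card_erase_of_mem (Finset.min'_mem _ _), T.2]
  omega

theorem count_KH_forests
    [Fintype G] [FiniteDimensional ℂ V] (ρ : Representation ℂ G V)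
    (hfaith : Function.Injective ρ) (hfix : fixedSpace ρ ⊤ = ⊥)
    (H K : Subgroup G) (hH : IsClosedSubgroup ρ H) (hK : IsClosedSubgroup ρ K)
    (hHK : H < K) (hKtop : K ≠ ⊤) (i j : ℕ) (hi : 0 < i) (hj : 0 < j) :
    -- (a) two components: a K-tree with i leaves and an H-tree with j leaves
    Nat.card {F : Set (FVertex (i + j) G) // IsFGForest ρ F ∧
        ∃ v₁ ∈ F, ∃ v₂ ∈ F, v₁ ≠ v₂ ∧ rootsOf F = {v₁, v₂} ∧
          fallenLeaves F = ∅ ∧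
          (∀ u ∈ F, (u = v₁ ∨ u.below v₁) → u.label = K) ∧
          (∀ u ∈ F, (u = v₂ ∨ u.below v₂) → u.label = H) ∧
          v₁.leaves.card = i ∧ v₂.leaves.card = j} =
      (i + j).choose i * lamHT ρ K i * lamHT ρ H j ∧
    -- (b) a single tree: the root of an H-tree with j leaves glued to a leaf of a
    -- K-tree with i leaves
    Nat.card {F : Set (FVertex (i + j - 1) G) // IsFGForest ρ F ∧
        (∃ v₁ ∈ F, rootsOf F = {v₁}) ∧ fallenLeaves F = ∅ ∧
        (∀ u ∈ F, u.label = K ∨ u.label = H) ∧ (∃ u ∈ F, u.label = K) ∧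
        ∃ w ∈ F, w.label = H ∧ w.leaves.card = j ∧
          ∀ u ∈ F, u.label = H → (u = w ∨ u.below w)} =
      (i + j - 1).choose j * lamHT ρ K i * lamHT ρ H j :=
  count_KH_forests_general ρ H K hHK hKtop i j hj
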